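/- arXiv:2410.03664 — 11 statements merged into one kernel-verified Lean document; each statement's English description precedes it below -/
import Mathlib

section
/- The set of affine rational points of the elliptic curve O_5 : y^2 = x^3 + 22x^2 + 125x over ℚ consists of exactly one point; that is, {(x, y) ∈ ℚ × ℚ : y^2 = x^3 + 22x^2 + 125x} = {(0, 0)}. -/
/-!
In lowest terms a rational point has `x = a / e²`, and for `x ≠ 0` it gives
`c² = a (a² + 22 a e² + 125 e⁴)` with `a > 0`; as the two factors can only share the prime `5`,
`a` is a square or five times a square. This yields a solution with `e ≠ 0` of the
"quartic one" `t² = s⁴ + 22 s² e² + 125 e⁴` or a solution with `s ≠ 0` of the "quartic five"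
`w² = 5 s⁴ + 22 s² e² + 25 e⁴`: the two 2-coverings of `O₅` for its 2-isogeny to
`y² = x (x² - 44 x - 16)`. The relevant 2-covering of the latter is the "quartic dual"
`E² = q⁴ - 11 p² q² - p⁴`.

Both directions of the descent factor a difference of two squares into coprime halves:
`t² = (s² + 11 e²)² + 4 e⁴` turns a quartic-one solution into a dual one with `p ∣ e`, and, for
`p = 2 P`, `(q² - 22 P²)² = E² + 500 P⁴` turns a dual solution into a quartic-one solution with
`2 G K = p`. So `|e|` strictly decreases, and there is no quartic-one solution. The quartic five
reduces to the other two through `(5 w)² = (25 e² + 11 s²)² + 4 s⁴`.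
-/

theorem Int.exists_pos_pow_eq_of_mul_eq_pow {a b c : ℤ} {k : ℕ} (hk : k ≠ 0) (ha : 0 < a)
    (hab : IsCoprime a b) (h : a * b = c ^ k) : ∃ d, 0 < d ∧ a = d ^ k := by
  obtain ⟨d, u, hu⟩ := exists_associated_pow_of_mul_eq_pow' hab h
  have had : a = |d| ^ k := by
    rw [← abs_of_pos ha, ← hu, abs_mul, Int.isUnit_iff_abs_eq.mp u.isUnit, mul_one, abs_pow]
  refine ⟨|d|, abs_pos.mpr ?_, had⟩
  rintro rfl
  simp [hk] at had
  omega

theorem Int.exists_sq_eq_of_sq_eq_sq_mul {b c M : ℤ} (hb : b ≠ 0) (h : c ^ 2 = b ^ 2 * M) :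
    ∃ t, M = t ^ 2 := by
  obtain ⟨t, rfl⟩ : b ∣ c := (Int.pow_dvd_pow_iff two_ne_zero).mp ⟨M, h⟩
  exact ⟨t, mul_left_cancel₀ (pow_ne_zero 2 hb) (by rw [← h]; ring)⟩

theorem Int.exists_coprime_mul_eq_of_sq_eq_sq_add_four_mul {t u N : ℤ} (ht : 0 ≤ t)
    (hN : 0 < N) (hu : IsCoprime u N) (h : t ^ 2 = u ^ 2 + 4 * N) :
    ∃ k₁ k₂, 0 < k₁ ∧ 0 < k₂ ∧ IsCoprime k₁ k₂ ∧ k₁ * k₂ = N ∧ k₁ + k₂ = t ∧ k₂ - k₁ = u := by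
  obtain ⟨k, hk⟩ : Even (t - u) := by
    have : Even (t ^ 2 - u ^ 2) := ⟨2 * N, by rw [h]; ring⟩
    simpa [Int.even_sub, Int.even_pow] using this
  have hprod : k * (k + u) = N := by
    have : 4 * (k * (k + u)) = 4 * N := by
      rw [show t = k + k + u by omega] at h
      linear_combination h
    omega
  have hpos : 0 < k ∧ 0 < k + u := by
    rcases pos_and_pos_or_neg_and_neg_of_mul_pos (hprod ▸ hN) with h' | h'
    · exact h'
    · omega
  have hcop : IsCoprime k (k + u) := by
    rw [← hprod] at hu
    rw [add_comm]
    simpa using hu.of_mul_right_left.symm.add_mul_left_right 1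
  exact ⟨k, k + u, hpos.1, hpos.2, hcop, hprod, by omega, by ring⟩

theorem Int.exists_pow_four_of_sq_eq_sq_add_four_mul_pow_four {t u e : ℤ} (he : e ≠ 0)
    (hu : IsCoprime u e) (h : t ^ 2 = u ^ 2 + 4 * e ^ 4) :
    ∃ m n, 0 < m ∧ 0 < n ∧ IsCoprime m n ∧ m * n = |e| ∧ u = n ^ 4 - m ^ 4 := by
  obtain ⟨k₁, k₂, hk₁, hk₂, hk, hprod, -, hdiff⟩ :=
    exists_coprime_mul_eq_of_sq_eq_sq_add_four_mul (abs_nonneg t)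
      ((by decide : Even 4).pow_pos he) hu.pow_right (by rwa [sq_abs])
  obtain ⟨m, hm, rfl⟩ := exists_pos_pow_eq_of_mul_eq_pow four_ne_zero hk₁ hk hprod
  obtain ⟨n, hn, rfl⟩ :=
    exists_pos_pow_eq_of_mul_eq_pow four_ne_zero hk₂ hk.symm (by rw [mul_comm, hprod])
  refine ⟨m, n, hm, hn, (IsCoprime.pow_iff four_pos four_pos).mp hk, ?_, hdiff.symm⟩
  rw [← pow_left_inj₀ (by positivity) (abs_nonneg e) four_ne_zero, mul_pow, hprod,
    (by decide : Even 4).pow_abs]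

theorem Int.exists_pow_four_of_mul_eq_prime_pow_three_mul_pow_four {a b p P : ℤ} (hp : Prime p)
    (hp0 : 0 < p) (ha : 0 < a) (hb : 0 < b) (hP : 0 < P) (hab : IsCoprime a b) (hpa : ¬ p ∣ a)
    (h : a * b = p ^ 3 * P ^ 4) :
    ∃ G K, 0 < G ∧ 0 < K ∧ IsCoprime G K ∧ P = G * K ∧ a = G ^ 4 ∧ b = p ^ 3 * K ^ 4 := by
  have hpb : IsCoprime a (p * b) := (hp.coprime_iff_not_dvd.mpr hpa).symm.mul_right hab
  have h' : a * (p * b) = (p * P) ^ 4 := by linear_combination p * h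
  obtain ⟨G, hG, rfl⟩ := exists_pos_pow_eq_of_mul_eq_pow four_ne_zero ha hpb h'
  obtain ⟨L, hL, hL4⟩ := exists_pos_pow_eq_of_mul_eq_pow four_ne_zero (by positivity) hpb.symm
    (by rw [mul_comm, h'])
  obtain ⟨K, rfl⟩ : p ∣ L := hp.dvd_of_dvd_pow (n := 4) ⟨b, hL4.symm⟩
  have hb : b = p ^ 3 * K ^ 4 := mul_left_cancel₀ hp.ne_zero (by linear_combination hL4)
  have hGK : IsCoprime G K := by
    rw [hb] at hab
    exact (IsCoprime.pow_iff four_pos four_pos).mp hab.of_mul_right_right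
  have hK : 0 < K := pos_of_mul_pos_right hL hp0.le
  refine ⟨G, K, hG, hK, hGK, ?_, rfl, hb⟩
  rw [← pow_left_inj₀ hP.le (by positivity) four_ne_zero]
  exact mul_left_cancel₀ (pow_ne_zero 3 hp.ne_zero) (by rw [← h, hb]; ring)

theorem Rat.exists_int_of_sq_eq_cubic {A B C : ℤ} {x y : ℚ}
    (h : y ^ 2 = x ^ 3 + A * x ^ 2 + B * x + C) :
    ∃ a e c : ℤ, e ≠ 0 ∧ IsCoprime a e ∧ x = a / e ^ 2 ∧
      c ^ 2 = a ^ 3 + A * a ^ 2 * e ^ 2 + B * a * e ^ 4 + C * e ^ 6 := by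
  obtain ⟨a, d, hd, had, rfl⟩ : ∃ a d : ℤ, 0 < d ∧ IsCoprime a d ∧ x = a / d :=
    ⟨x.num, x.den, by positivity, x.isCoprime_num_den, x.num_div_den.symm⟩
  obtain ⟨c, f, hf, hcf, rfl⟩ : ∃ c f : ℤ, 0 < f ∧ IsCoprime c f ∧ y = c / f :=
    ⟨y.num, y.den, by positivity, y.isCoprime_num_den, y.num_div_den.symm⟩
  have key : c ^ 2 * d ^ 3 = f ^ 2 * (a ^ 3 + A * a ^ 2 * d + B * a * d ^ 2 + C * d ^ 3) := by
    have hq : ((c ^ 2 * d ^ 3 : ℤ) : ℚ)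
        = ((f ^ 2 * (a ^ 3 + A * a ^ 2 * d + B * a * d ^ 2 + C * d ^ 3) : ℤ) : ℚ) := by
      field_simp at h
      push_cast
      linear_combination h
    exact_mod_cast hq
  have hcub : IsCoprime d (a ^ 3 + A * a ^ 2 * d + B * a * d ^ 2 + C * d ^ 3) := by
    rw [show a ^ 3 + A * a ^ 2 * d + B * a * d ^ 2 + C * d ^ 3
      = a ^ 3 + d * (A * a ^ 2 + B * a * d + C * d ^ 2) by ring]
    exact had.symm.pow_right.add_mul_left_right _
  have hfd : f ^ 2 = d ^ 3 := by
    refine Int.dvd_antisymm (by positivity) (by positivity) ?_ ?_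
    · exact (hcf.symm.pow (m := 2) (n := 2)).dvd_of_dvd_mul_left ⟨_, key⟩
    · exact hcub.pow_left.dvd_of_dvd_mul_right ⟨c ^ 2, by rw [← key]; ring⟩
  obtain ⟨e, rfl⟩ : d ∣ f :=
    (Int.pow_dvd_pow_iff two_ne_zero).mp (hfd ▸ pow_dvd_pow d (by norm_num))
  have hde : d = e ^ 2 :=
    mul_left_cancel₀ (pow_ne_zero 2 hd.ne') (by linear_combination hfd.symm)
  subst hde
  have he : e ≠ 0 := by rintro rfl; simp at hd
  refine ⟨a, e, c, he, had.of_isCoprime_of_dvd_right (dvd_pow_self e two_ne_zero),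
    by push_cast; ring, mul_left_cancel₀ (pow_ne_zero 2 hf.ne') ?_⟩
  linear_combination key

theorem even_of_sq_eq_quartic_dual {p q E : ℤ}
    (h : E ^ 2 = q ^ 4 - 11 * p ^ 2 * q ^ 2 - p ^ 4) : Even p := by
  by_contra hp
  obtain ⟨k, rfl⟩ := Int.not_even_iff_odd.mp hp
  have h8 := congrArg (fun z : ℤ => (z : ZMod 8)) h
  push_cast at h8
  have : ∀ x y z : ZMod 8, z ^ 2 ≠ y ^ 4 - 11 * (2 * x + 1) ^ 2 * y ^ 2 - (2 * x + 1) ^ 4 := by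
    decide
  exact this _ _ _ h8

theorem five_dvd_of_five_dvd_quartic_dual {p q : ℤ}
    (h : 5 ∣ q ^ 4 - 11 * p ^ 2 * q ^ 2 - p ^ 4) : 5 ∣ p ∧ 5 ∣ q := by
  have h5 := (ZMod.intCast_zmod_eq_zero_iff_dvd _ 5).mpr h
  push_cast at h5
  have : ∀ x y : ZMod 5, y ^ 4 - 11 * x ^ 2 * y ^ 2 - x ^ 4 = 0 → x = 0 ∧ y = 0 := by decide
  exact_mod_cast (this _ _ h5).imp (ZMod.intCast_zmod_eq_zero_iff_dvd _ 5).mp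
    (ZMod.intCast_zmod_eq_zero_iff_dvd _ 5).mp

theorem exists_quartic_one_of_quartic_dual {p q E : ℤ} (hp : 0 < p) (hpq : IsCoprime p q)
    (h : E ^ 2 = q ^ 4 - 11 * p ^ 2 * q ^ 2 - p ^ 4) :
    ∃ G K, 0 < G ∧ 0 < K ∧ IsCoprime G K ∧ p = 2 * G * K ∧
      q ^ 2 = G ^ 4 + 22 * G ^ 2 * K ^ 2 + 125 * K ^ 4 := by
  have h5 : Prime (5 : ℤ) := Int.prime_ofNat_iff.mpr Nat.prime_five
  obtain ⟨P, rfl⟩ := even_of_sq_eq_quartic_dual h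
  have hP : 0 < P := by omega
  have hE5 : IsCoprime E 5 := by
    refine (h5.coprime_iff_not_dvd.mpr fun h5E => ?_).symm
    obtain ⟨h5p, h5q⟩ := five_dvd_of_five_dvd_quartic_dual (h ▸ dvd_pow h5E two_ne_zero)
    exact h5.not_isUnit (hpq.isUnit_of_dvd' h5p h5q)
  have hEP : IsCoprime E P := by
    have hPq : IsCoprime P q := hpq.of_isCoprime_of_dvd_left (dvd_add_self_left.mpr dvd_rfl)
    have : IsCoprime P (E ^ 2) := by
      rw [h, show q ^ 4 - 11 * (P + P) ^ 2 * q ^ 2 - (P + P) ^ 4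
        = q ^ 4 + P * (-(44 * P * q ^ 2) - 16 * P ^ 3) by ring]
      exact hPq.pow_right.add_mul_left_right _
    exact ((IsCoprime.pow_right_iff two_pos).mp this).symm
  have key : (q ^ 2 - 22 * P ^ 2) ^ 2 = E ^ 2 + 4 * (5 ^ 3 * P ^ 4) := by linear_combination -h
  have ht : 0 ≤ q ^ 2 - 22 * P ^ 2 := by nlinarith [sq_nonneg E, sq_nonneg q, pow_pos hP 4]
  obtain ⟨k₁, k₂, hk₁, hk₂, hk, hprod, hsum, -⟩ :=
    Int.exists_coprime_mul_eq_of_sq_eq_sq_add_four_mul ht (by positivity)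
      (hE5.pow_right.mul_right hEP.pow_right) key
  obtain ⟨G, K, hG, hK, hGK, rfl, hsum'⟩ :
      ∃ G K, 0 < G ∧ 0 < K ∧ IsCoprime G K ∧ P = G * K ∧ k₁ + k₂ = G ^ 4 + 5 ^ 3 * K ^ 4 := by
    by_cases h5k₁ : 5 ∣ k₁
    · have h5k₂ : ¬ 5 ∣ k₂ := fun h5k₂ => h5.not_isUnit (hk.isUnit_of_dvd' h5k₁ h5k₂)
      obtain ⟨G, K, hG, hK, hGK, hP, rfl, rfl⟩ :=
        Int.exists_pow_four_of_mul_eq_prime_pow_three_mul_pow_four h5 (by norm_num)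
          hk₂ hk₁ hP hk.symm h5k₂ (by rw [mul_comm, hprod])
      exact ⟨G, K, hG, hK, hGK, hP, by ring⟩
    · obtain ⟨G, K, hG, hK, hGK, hP, rfl, rfl⟩ :=
        Int.exists_pow_four_of_mul_eq_prime_pow_three_mul_pow_four h5 (by norm_num)
          hk₁ hk₂ hP hk h5k₁ hprod
      exact ⟨G, K, hG, hK, hGK, hP, rfl⟩
  exact ⟨G, K, hG, hK, hGK, by ring, by linear_combination hsum' - hsum⟩

theorem exists_quartic_dual_of_quartic_one {s e t : ℤ} (hse : IsCoprime s e) (he : e ≠ 0)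
    (h : t ^ 2 = s ^ 4 + 22 * s ^ 2 * e ^ 2 + 125 * e ^ 4) :
    ∃ m n, 0 < m ∧ 0 < n ∧ IsCoprime m n ∧ m * n = |e| ∧
      s ^ 2 = n ^ 4 - 11 * m ^ 2 * n ^ 2 - m ^ 4 := by
  have hu : IsCoprime (s ^ 2 + 11 * e ^ 2) e := by
    rw [show s ^ 2 + 11 * e ^ 2 = s ^ 2 + e * (11 * e) by ring, IsCoprime.add_mul_left_left_iff]
    exact hse.pow_left
  obtain ⟨m, n, hm, hn, hmn, hprod, hu'⟩ :=
    Int.exists_pow_four_of_sq_eq_sq_add_four_mul_pow_four he hu (t := t) (by linear_combination h)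
  have he2 : e ^ 2 = m ^ 2 * n ^ 2 := by rw [← sq_abs, ← hprod]; ring
  exact ⟨m, n, hm, hn, hmn, hprod, by linear_combination hu' - 11 * he2⟩

theorem sq_ne_quartic_one {s e t : ℤ} (hse : IsCoprime s e) (he : e ≠ 0) :
    t ^ 2 ≠ s ^ 4 + 22 * s ^ 2 * e ^ 2 + 125 * e ^ 4 := by
  induction hN : e.natAbs using Nat.strong_induction_on generalizing s e t with
  | _ N ih =>
  intro h
  obtain ⟨m, n, hm, hn, hmn, hprod, hs⟩ := exists_quartic_dual_of_quartic_one hse he h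
  obtain ⟨G, K, hG, hK, hGK, rfl, hn2⟩ := exists_quartic_one_of_quartic_dual hm hmn hs
  have hKe : K < |e| := by rw [← hprod]; nlinarith
  rw [Int.abs_eq_natAbs] at hKe
  exact ih K.natAbs (by omega) hGK hK.ne' rfl hn2

theorem sq_ne_quartic_dual {p q E : ℤ} (hpq : IsCoprime p q) (hp : p ≠ 0) :
    E ^ 2 ≠ q ^ 4 - 11 * p ^ 2 * q ^ 2 - p ^ 4 := by
  intro h
  obtain ⟨G, K, -, hK, hGK, -, hq⟩ := exists_quartic_one_of_quartic_dual (E := E)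
    (abs_pos.mpr hp) hpq.abs_left (by rwa [sq_abs, (by decide : Even 4).pow_abs])
  exact sq_ne_quartic_one hGK hK.ne' hq

theorem sq_ne_quartic_five {s e w : ℤ} (hse : IsCoprime s e) (hs : s ≠ 0) :
    w ^ 2 ≠ 5 * s ^ 4 + 22 * s ^ 2 * e ^ 2 + 25 * e ^ 4 := by
  have h5 : Prime (5 : ℤ) := Int.prime_ofNat_iff.mpr Nat.prime_five
  intro h
  by_cases h5s : 5 ∣ s
  · obtain ⟨s', rfl⟩ := h5s
    obtain ⟨t, ht⟩ := Int.exists_sq_eq_of_sq_eq_sq_mul (b := 5) (by norm_num)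
      (M := e ^ 4 + 22 * e ^ 2 * s' ^ 2 + 125 * s' ^ 4) (c := w) (by linear_combination h)
    exact sq_ne_quartic_one hse.of_mul_left_right.symm (by rintro rfl; simp at hs) ht.symm
  · have hu : IsCoprime (25 * e ^ 2 + 11 * s ^ 2) s := by
      have h25 : IsCoprime (25 * e ^ 2) s :=
        (show IsCoprime ((5 : ℤ) ^ 2) s from (h5.coprime_iff_not_dvd.mpr h5s).pow_left).mul_left
          hse.symm.pow_left
      rwa [show 25 * e ^ 2 + 11 * s ^ 2 = 25 * e ^ 2 + s * (11 * s) by ring,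
        IsCoprime.add_mul_left_left_iff]
    obtain ⟨m, n, hm, hn, hmn, hprod, hu'⟩ := Int.exists_pow_four_of_sq_eq_sq_add_four_mul_pow_four
      hs hu (t := 5 * w) (by linear_combination 25 * h)
    have hs2 : s ^ 2 = m ^ 2 * n ^ 2 := by rw [← sq_abs, ← hprod]; ring
    exact sq_ne_quartic_dual hmn hm.ne' (E := 5 * e) (by linear_combination hu' - 11 * hs2)

theorem exists_eq_sq_or_eq_five_mul_sq {a e c : ℤ} (ha : 0 < a) (hae : IsCoprime a e)
    (h : c ^ 2 = a * (a ^ 2 + 22 * a * e ^ 2 + 125 * e ^ 4)) :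
    ∃ s, s ≠ 0 ∧ (a = s ^ 2 ∨ a = 5 * s ^ 2) := by
  have h5 : Prime (5 : ℤ) := Int.prime_ofNat_iff.mpr Nat.prime_five
  obtain ⟨a', ha', h5a'⟩ := (Int.finiteMultiplicity_iff.mpr ⟨by norm_num, ha.ne'⟩ :
    FiniteMultiplicity (5 : ℤ) a).exists_eq_pow_mul_and_not_dvd
  set j := multiplicity 5 a
  have ha'e : IsCoprime a' e := hae.of_isCoprime_of_dvd_left (Dvd.intro_left _ ha'.symm)
  have ha'5 : IsCoprime a' 5 := (h5.coprime_iff_not_dvd.mpr h5a').symm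
  have ha'M : IsCoprime a' (5 ^ j * (a ^ 2 + 22 * a * e ^ 2 + 125 * e ^ 4)) := by
    refine ha'5.pow_right.mul_right ?_
    rw [show a ^ 2 + 22 * a * e ^ 2 + 125 * e ^ 4
      = 5 ^ 3 * e ^ 4 + a' * (5 ^ j * (a + 22 * e ^ 2)) by rw [ha']; ring]
    exact (ha'5.pow_right.mul_right ha'e.pow_right).add_mul_left_right _
  have ha'pos : 0 < a' := pos_of_mul_pos_right (ha'.symm ▸ ha) (by positivity)
  obtain ⟨s, hs⟩ := Int.sq_of_isCoprime ha'M (c := c) (by rw [h, ha']; ring)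
  replace hs : a' = s ^ 2 := hs.resolve_right (by nlinarith [sq_nonneg s])
  have hs0 : s ≠ 0 := by rintro rfl; simp at hs; omega
  rcases Nat.even_or_odd' j with ⟨i, hi | hi⟩
  · exact ⟨5 ^ i * s, by positivity, Or.inl (by rw [ha', hi, hs]; ring)⟩
  · exact ⟨5 ^ i * s, by positivity, Or.inr (by rw [ha', hi, hs]; ring)⟩
/-- The set of affine rational points of the elliptic curve
`O₅ : y² = x³ + 22x² + 125x` over `ℚ` consists of exactly one point, `(0, 0)`. -/
theorem stmt_0 :
    {p : ℚ × ℚ | p.2 ^ 2 = p.1 ^ 3 + 22 * p.1 ^ 2 + 125 * p.1} = {(0, 0)} := by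
  ext ⟨x, y⟩
  simp only [Set.mem_ofPred_eq, Set.mem_singleton_iff, Prod.mk.injEq]
  refine ⟨fun h => ?_, fun ⟨hx, hy⟩ => by subst hx hy; norm_num⟩
  by_cases hx : x = 0
  · subst hx
    exact ⟨rfl, pow_eq_zero_iff two_ne_zero |>.mp (by simpa using h)⟩
  exfalso
  obtain ⟨a, e, c, he, hae, rfl, hc⟩ := Rat.exists_int_of_sq_eq_cubic (A := 22) (B := 125)
    (C := 0) (x := x) (y := y) (by push_cast; linear_combination h)
  replace hc : c ^ 2 = a * (a ^ 2 + 22 * a * e ^ 2 + 125 * e ^ 4) := by linear_combination hc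
  have ha : 0 < a := by
    have ha0 : a ≠ 0 := by rintro rfl; simp at hx
    have hM : 0 < a ^ 2 + 22 * a * e ^ 2 + 125 * e ^ 4 := by
      nlinarith [sq_nonneg (a + 11 * e ^ 2), pow_pos (sq_pos_of_ne_zero he) 2]
    exact (nonneg_of_mul_nonneg_left (hc ▸ sq_nonneg c) hM).lt_of_ne' ha0
  obtain ⟨s, hs, rfl | rfl⟩ := exists_eq_sq_or_eq_five_mul_sq ha hae hc
  · obtain ⟨t, ht⟩ := Int.exists_sq_eq_of_sq_eq_sq_mul hs hc
    exact sq_ne_quartic_one (t := t) ((IsCoprime.pow_left_iff two_pos).mp hae) he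
      (by rw [← ht]; ring)
  · obtain ⟨t, ht⟩ := Int.exists_sq_eq_of_sq_eq_sq_mul (b := 5 * s) (by positivity) (c := c)
      (M := 5 * s ^ 4 + 22 * s ^ 2 * e ^ 2 + 25 * e ^ 4) (by linear_combination hc)
    exact sq_ne_quartic_five ((IsCoprime.pow_left_iff two_pos).mp hae.of_mul_left_right) hs
      ht.symm
end

section
/- The set of affine rational points of the elliptic curve O_13 : y^2 = x^3 + 6x^2 + 13x over ℚ consists of exactly one point; that is, {(x, y) ∈ ℚ × ℚ : y^2 = x^3 + 6x^2 + 13x} = {(0, 0)}. -/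
/-!
A point with `x ≠ 0` has `x > 0` and, in lowest terms, `x = m / t²`, `y = P / t³` with
`P² = m (m² + 6mt² + 13t⁴)`. The two factors have gcd dividing 13, so `m = a²` or
`m = 13a²`, and either way one gets a primitive solution of `v² = u⁴ + 6u²e² + 13e⁴` with
`e > 0`. This quartic has none, by Fermat descent: from `v² = (u² + 3e²)² + 4e⁴` one gets
`e = αβ` with `u² + 3e² = β⁴ - α⁴`; modulo 8 the factor `α = 2r` is even, and factoring
`(β² - 6r²)² - u² = 52r⁴` yields a primitive solution with `0 < e' ≤ r < e`.
-/

theorem Int.exists_nonneg_pow_eq_of_mul_eq_pow {a b c : ℤ} {k : ℕ} (hk : Even k)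
    (hab : IsCoprime a b) (ha : 0 < a) (h : a * b = c ^ k) : ∃ d, 0 ≤ d ∧ a = d ^ k := by
  obtain ⟨d, hd⟩ := exists_associated_pow_of_mul_eq_pow' hab h
  refine ⟨|d|, abs_nonneg d, ?_⟩
  rcases Int.associated_iff.mp hd with hd | hd
  · rw [hk.pow_abs, hd]
  · linarith [hk.pow_nonneg d]

theorem Int.exists_pow_four_of_mul_eq_pow_four {a b c : ℤ} (hab : IsCoprime a b) (ha : 0 < a)
    (hc : 0 < c) (h : a * b = c ^ 4) :
    ∃ s t, 0 ≤ s ∧ 0 ≤ t ∧ a = s ^ 4 ∧ b = t ^ 4 ∧ s * t = c := by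
  have hb : 0 < b := pos_of_mul_pos_right (h ▸ pow_pos hc 4) ha.le
  have h4 : Even 4 := by decide
  obtain ⟨s, hs, rfl⟩ := exists_nonneg_pow_eq_of_mul_eq_pow h4 hab ha h
  obtain ⟨t, ht, rfl⟩ :=
    exists_nonneg_pow_eq_of_mul_eq_pow h4 hab.symm hb (by rw [mul_comm]; exact h)
  refine ⟨s, t, hs, ht, rfl, rfl, ?_⟩
  exact (pow_left_inj₀ (mul_nonneg hs ht) hc.le four_ne_zero).mp (by rw [mul_pow, h])

theorem Nat.exists_eq_sq_of_pow_three_eq_sq {n q : ℕ} (h : n ^ 3 = q ^ 2) : ∃ t, n = t ^ 2 := by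
  obtain ⟨t, rfl⟩ : n ∣ q := (Nat.pow_dvd_pow_iff two_ne_zero).mp ⟨n, by rw [← h]; ring⟩
  rcases n.eq_zero_or_pos with rfl | hn
  · exact ⟨0, rfl⟩
  · exact ⟨t, Nat.eq_of_mul_eq_mul_left (pow_pos hn 2) (by rw [← pow_succ, h]; ring)⟩

theorem Int.prime_thirteen : Prime (13 : ℤ) := by norm_num

def quartic (u e : ℤ) : ℤ := u ^ 4 + 6 * u ^ 2 * e ^ 2 + 13 * e ^ 4

theorem exists_pow_four_of_sq_eq_quartic {u e v : ℤ} (he : 0 < e) (hue : IsCoprime u e)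
    (h : v ^ 2 = quartic u e) :
    ∃ α β : ℤ, 0 < α ∧ 0 < β ∧ α * β = e ∧ u ^ 2 + 3 * e ^ 2 = β ^ 4 - α ^ 4 := by
  obtain ⟨A, hA⟩ : ∃ A, A = u ^ 2 + 3 * e ^ 2 := ⟨_, rfl⟩
  obtain ⟨w, hw0, hw⟩ : ∃ w : ℤ, 0 ≤ w ∧ w ^ 2 = A ^ 2 + 4 * e ^ 4 :=
    ⟨|v|, abs_nonneg v, by rw [sq_abs, h, quartic, hA]; ring⟩
  obtain ⟨a, ha⟩ : Even (w - A) := by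
    have : Even (w ^ 2 - A ^ 2) := ⟨2 * e ^ 4, by rw [hw]; ring⟩
    simpa [Int.even_sub, Int.even_pow] using this
  have hprod : a * (a + A) = e ^ 4 := by
    have : 4 * (a * (a + A)) = 4 * e ^ 4 := by linear_combination hw - (w + A + 2 * a) * ha
    exact mul_left_cancel₀ four_ne_zero this
  have hA0 : 0 < A := by rw [hA]; positivity
  have ha0 : 0 < a := by nlinarith [pow_pos he 4]
  have hcop : IsCoprime a (a + A) := by
    have hAe : IsCoprime A (e ^ 4) := by
      rw [hA, show u ^ 2 + 3 * e ^ 2 = u ^ 2 + e * (3 * e) by ring]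
      exact (hue.pow_left.add_mul_left_left _).pow_right
    simpa only [add_comm A, mul_one] using
      (hAe.of_isCoprime_of_dvd_right (Dvd.intro _ hprod)).symm.add_mul_left_right 1
  obtain ⟨α, β, hα, -, rfl, hb, hαβ⟩ :=
    Int.exists_pow_four_of_mul_eq_pow_four hcop ha0 he hprod
  have hα' : 0 < α := lt_of_le_of_ne hα (by rintro rfl; simp at ha0)
  exact ⟨α, β, hα', pos_of_mul_pos_right (hαβ ▸ he) hα'.le, hαβ, by linarith⟩

theorem even_of_sq_add_eq_pow_four_sub {u α β : ℤ}
    (h : u ^ 2 + 3 * (α * β) ^ 2 = β ^ 4 - α ^ 4) : Even α := by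
  by_contra hα
  obtain ⟨k, rfl⟩ := Int.not_even_iff_odd.mp hα
  have h8 := congrArg (Int.cast : ℤ → ZMod 8) h
  push_cast at h8
  -- an odd fourth power is `1 mod 8`, leaving `u² ≡ 3, 5` or `7 (mod 8)`
  exact (by decide : ∀ k b u : ZMod 8,
    u ^ 2 + 3 * ((2 * k + 1) * b) ^ 2 ≠ b ^ 4 - (2 * k + 1) ^ 4) _ _ _ h8

theorem exists_smaller_of_mul_eq_thirteen_mul_pow_four {p q r β : ℤ} (hr : 0 < r)
    (hcop : IsCoprime (q - p) r) (h13 : 13 ∣ p) (hprod : p * q = 13 * r ^ 4)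
    (hsum : p + q = β ^ 2 - 6 * r ^ 2) :
    ∃ s t, 0 < s ∧ s ≤ r ∧ IsCoprime t s ∧ β ^ 2 = quartic t s := by
  obtain ⟨p, rfl⟩ := h13
  have hprod : p * q = r ^ 4 := by
    have : 13 * (p * q) = 13 * r ^ 4 := by linear_combination hprod
    exact mul_left_cancel₀ (by norm_num) this
  have hpq : IsCoprime p q := by
    have : IsCoprime (q + p * (-13)) p := by
      convert (hprod ▸ hcop.pow_right (n := 4)).of_mul_right_left using 1; ring
    exact this.of_add_mul_left_left.symm
  have hp0 : p ≠ 0 := by rintro rfl; linarith [pow_pos hr 4]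
  rcases hp0.lt_or_gt with hp | hp
  · obtain ⟨s, t, hs, -, hps, hqt, rfl⟩ :=
      Int.exists_pow_four_of_mul_eq_pow_four hpq.neg_neg (neg_pos.2 hp) hr (by rw [← hprod]; ring)
    have hs' : 0 < s := lt_of_le_of_ne hs (by rintro rfl; simp at hps; omega)
    have : β ^ 2 + 4 * s ^ 4 + (3 * s ^ 2 - t ^ 2) ^ 2 = 0 := by
      linear_combination -hsum - 13 * hps - hqt
    nlinarith [sq_nonneg β, sq_nonneg (3 * s ^ 2 - t ^ 2), pow_pos hs' 4]
  · obtain ⟨s, t, hs, ht, rfl, rfl, rfl⟩ :=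
      Int.exists_pow_four_of_mul_eq_pow_four hpq hp hr hprod
    have hs' : 0 < s := lt_of_le_of_ne hs (by rintro rfl; simp at hp)
    have ht' : 0 < t := pos_of_mul_pos_right hr hs
    refine ⟨s, t, hs', le_mul_of_one_le_right hs ht', ?_, ?_⟩
    · exact (IsCoprime.pow_iff four_pos four_pos).mp hpq.symm
    · rw [quartic]; linear_combination -hsum

theorem exists_smaller_solution {u e v : ℤ} (he : 0 < e) (hue : IsCoprime u e)
    (h : v ^ 2 = quartic u e) :
    ∃ u' e' v', 0 < e' ∧ e' < e ∧ IsCoprime u' e' ∧ v' ^ 2 = quartic u' e' := by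
  obtain ⟨α, β, hα, hβ, rfl, hαβ⟩ := exists_pow_four_of_sq_eq_quartic he hue h
  obtain ⟨r, rfl⟩ := even_of_sq_add_eq_pow_four_sub hαβ
  have hr : 0 < r := by omega
  suffices ∃ s t, 0 < s ∧ s ≤ r ∧ IsCoprime t s ∧ β ^ 2 = quartic t s by
    obtain ⟨s, t, hs, hsr, hts, hst⟩ := this
    exact ⟨t, s, β, hs, by nlinarith, hts, hst⟩
  have hur : IsCoprime u r := hue.of_isCoprime_of_dvd_right ⟨2 * β, by ring⟩
  obtain ⟨p, hp⟩ : Even (β ^ 2 - 6 * r ^ 2 - u) := by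
    have : Even ((β ^ 2 - 6 * r ^ 2) ^ 2 - u ^ 2) := ⟨26 * r ^ 4, by linear_combination -hαβ⟩
    simpa [Int.even_sub, Int.even_pow] using this
  have hprod : p * (p + u) = 13 * r ^ 4 := by
    have : 4 * (p * (p + u)) = 4 * (13 * r ^ 4) := by
      linear_combination -hαβ - (β ^ 2 - 6 * r ^ 2 + u + 2 * p) * hp
    exact mul_left_cancel₀ four_ne_zero this
  have hsum : p + (p + u) = β ^ 2 - 6 * r ^ 2 := by linarith
  rcases Int.prime_thirteen.dvd_mul.mp (Dvd.intro _ hprod.symm) with h13 | h13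
  · exact exists_smaller_of_mul_eq_thirteen_mul_pow_four hr (by simpa using hur) h13 hprod hsum
  · refine exists_smaller_of_mul_eq_thirteen_mul_pow_four hr ?_ h13
      (by rw [mul_comm, hprod]) (by rw [add_comm, hsum])
    simpa using hur.neg_left

theorem quartic_ne_sq {u e v : ℤ} (he : 0 < e) (hue : IsCoprime u e) : v ^ 2 ≠ quartic u e := by
  intro h
  obtain ⟨u', e', v', he', hlt, hue', h'⟩ := exists_smaller_solution he hue h
  exact quartic_ne_sq he' hue' h'
termination_by e.toNat
decreasing_by omega

theorem sq_ne_weighted_cubic {m t P : ℤ} (hm : 0 < m) (ht : 0 < t) (hmt : IsCoprime m t) :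
    P ^ 2 ≠ m * (m ^ 2 + 6 * m * t ^ 2 + 13 * t ^ 4) := by
  intro h
  by_cases h13 : 13 ∣ m
  · obtain ⟨m, rfl⟩ := h13
    obtain ⟨P, rfl⟩ : 13 ∣ P := Int.prime_thirteen.dvd_of_dvd_pow (n := 2)
      ⟨13 * m * (13 * m ^ 2 + 6 * m * t ^ 2 + t ^ 4), by rw [h]; ring⟩
    have h' : m * (t ^ 4 + m * (6 * t ^ 2 + 13 * m)) = P ^ 2 := by
      have : 169 * (m * (t ^ 4 + m * (6 * t ^ 2 + 13 * m))) = 169 * P ^ 2 := by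
        linear_combination -h
      exact mul_left_cancel₀ (by norm_num) this
    have hmt : IsCoprime m t := hmt.of_mul_left_right
    have hm : 0 < m := by omega
    have hcop : IsCoprime m (t ^ 4 + m * (6 * t ^ 2 + 13 * m)) :=
      hmt.pow_right.add_mul_left_right _
    obtain ⟨a, ha, rfl⟩ := Int.exists_nonneg_pow_eq_of_mul_eq_pow even_two hcop hm h'
    obtain ⟨b, -, hb⟩ := Int.exists_nonneg_pow_eq_of_mul_eq_pow even_two hcop.symm
      (by positivity) (by rw [mul_comm]; exact h')
    refine quartic_ne_sq (lt_of_le_of_ne ha ?_) ((IsCoprime.pow_left_iff two_pos).mp hmt).symm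
      (by rw [quartic, ← hb]; ring)
    rintro rfl; simp at hm
  · have hcop : IsCoprime m (13 * t ^ 4 + m * (m + 6 * t ^ 2)) :=
      ((Int.prime_thirteen.coprime_iff_not_dvd.mpr h13).symm.mul_right
        hmt.pow_right).add_mul_left_right _
    obtain ⟨a, -, rfl⟩ := Int.exists_nonneg_pow_eq_of_mul_eq_pow (c := P) even_two hcop hm
      (by linear_combination -h)
    obtain ⟨b, -, hb⟩ := Int.exists_nonneg_pow_eq_of_mul_eq_pow (c := P) even_two hcop.symm
      (by positivity) (by linear_combination -h)
    exact quartic_ne_sq ht ((IsCoprime.pow_left_iff two_pos).mp hmt)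
      (by rw [quartic, ← hb]; ring)

theorem exists_weighted_cubic_of_sq_eq {x y : ℚ} (hx : 0 < x)
    (h : y ^ 2 = x ^ 3 + 6 * x ^ 2 + 13 * x) :
    ∃ m t P : ℤ, 0 < m ∧ 0 < t ∧ IsCoprime m t ∧
      P ^ 2 = m * (m ^ 2 + 6 * m * t ^ 2 + 13 * t ^ 4) := by
  obtain ⟨m, n, hn, hmn, rfl⟩ : ∃ (m : ℤ) (n : ℕ), 0 < n ∧ IsCoprime m n ∧ x = m / n :=
    ⟨x.num, x.den, x.pos, Int.isCoprime_iff_gcd_eq_one.mpr x.reduced, (Rat.num_div_den x).symm⟩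
  have hK : IsCoprime (m * (m ^ 2 + n * (6 * m + 13 * n))) ((n : ℤ) ^ 3) :=
    (hmn.mul_left ((hmn.pow_left (m := 2)).add_mul_left_left _)).pow_right (n := 3)
  have hK' : Nat.Coprime (m * (m ^ 2 + n * (6 * m + 13 * n))).natAbs ((n : ℤ) ^ 3).natAbs :=
    Int.isCoprime_iff_gcd_eq_one.mp hK
  have hn3 : (0 : ℤ) < n ^ 3 := by positivity
  have hy : y ^ 2 = ((m * (m ^ 2 + n * (6 * m + 13 * n)) : ℤ) : ℚ) / ((n ^ 3 : ℤ) : ℚ) := by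
    rw [h]; push_cast; field_simp; ring
  have hden := Rat.den_div_eq_of_coprime hn3 hK'
  have hnum := Rat.num_div_eq_of_coprime hn3 hK'
  rw [← hy, Rat.den_pow] at hden
  rw [← hy, Rat.num_pow] at hnum
  obtain ⟨t, rfl⟩ :=
    Nat.exists_eq_sq_of_pow_three_eq_sq (n := n) (q := y.den) (by exact_mod_cast hden.symm)
  refine ⟨m, t, y.num, ?_, Int.natCast_pos.mpr (Nat.pos_of_ne_zero (by rintro rfl; simp at hn)),
    ?_, by rw [hnum]; push_cast; ring⟩
  · exact_mod_cast (div_pos_iff_of_pos_right (by positivity)).mp hx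
  · exact (IsCoprime.pow_right_iff two_pos).mp (by exact_mod_cast hmn)

/-- The set of affine rational points of the elliptic curve
`O₁₃ : y² = x³ + 6x² + 13x` over `ℚ` consists of exactly one point, `(0, 0)`. -/
theorem stmt_2 :
    {p : ℚ × ℚ | p.2 ^ 2 = p.1 ^ 3 + 6 * p.1 ^ 2 + 13 * p.1} = {(0, 0)} := by
  ext ⟨x, y⟩
  simp only [Set.mem_ofPred_eq, Set.mem_singleton_iff, Prod.mk.injEq]
  refine ⟨fun h => ?_, fun ⟨hx, hy⟩ => by subst hx hy; norm_num⟩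
  obtain rfl | hx := (show 0 ≤ x by nlinarith [sq_nonneg y, sq_nonneg (x + 3)]).eq_or_lt
  · exact ⟨rfl, by simpa using h⟩
  · obtain ⟨m, t, P, hm, ht, hmt, hP⟩ := exists_weighted_cubic_of_sq_eq hx h
    exact (sq_ne_weighted_cubic hm ht hmt hP).elim
end

section
/- The set of affine rational points of the elliptic curve O_8 : y^2 = x^3 + 12x^2 + 32x over ℚ consists of exactly three points; that is, {(x, y) ∈ ℚ × ℚ : y^2 = x^3 + 12x^2 + 32x} = {(0, 0), (−4, 0), (−8, 0)}. -/
/-!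
The substitution `x = 4X - 4`, `y = 8Y` turns `O₈` into the congruent number curve
`E : y² = x³ - x`, so it suffices to show that every rational point of `E` has `y = 0`.
If `P = (x, y)` had `y ≠ 0`, the abscissa of `2P` would be the square of `s = (x² + 1) / 2y`
and `s⁴ - 1` would be a nonzero rational square (nonzero because `2` is not a rational square).
Clearing denominators gives a nontrivial integer solution of `a⁴ - b⁴ = c²`, which Fermat's
infinite descent rules out: two rounds of the parametrisation of primitive Pythagorean triples
produce a solution with smaller `|a|`.
-/

def QuarticDiffSq (a b c : ℤ) : Prop :=
  b ≠ 0 ∧ c ≠ 0 ∧ a ^ 4 - b ^ 4 = c ^ 2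

theorem exists_sq_eq_pow_four_of_mul_eq_sq {m n k : ℤ} (hmn : IsCoprime m n)
    (h : m * n = k ^ 2) : ∃ d, m ^ 2 = d ^ 4 := by
  obtain ⟨d, hd | hd⟩ := Int.sq_of_isCoprime hmn h <;> exact ⟨d, by rw [hd]; ring⟩

/-- Parametrise the primitive Pythagorean triple `(t², 2s², |a|)` as `(p² - q², 2pq, p² + q²)`;
then `p = ±u²`, `q = ±v²`. -/
theorem exists_quarticDiffSq_of_sq_eq_pow_four_add {a s t : ℤ}
    (h : a ^ 2 = t ^ 4 + 4 * s ^ 4) (ht : Odd t) (hts : IsCoprime t s) (hs : s ≠ 0) :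
    ∃ u v, QuarticDiffSq u v t ∧ u.natAbs < a.natAbs := by
  have ha : a ≠ 0 := by
    rintro rfl
    have : 0 < t ^ 4 + 4 * s ^ 4 := by positivity
    linarith
  have hpyth : PythagoreanTriple (t ^ 2) (2 * s ^ 2) |a| := by
    unfold PythagoreanTriple
    rw [abs_mul_abs_self]
    linear_combination -h
  have hcop : IsCoprime (t ^ 2) (2 * s ^ 2) :=
    (Int.isCoprime_two_right.mpr ht).pow_left.mul_right hts.pow
  obtain ⟨p, q, htpq, hspq, hapq, hpq, -, -⟩ := hpyth.coprime_classification'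
    (Int.isCoprime_iff_gcd_eq_one.mp hcop) (Int.odd_iff.mp ht.pow) (abs_pos.mpr ha)
  have hpq : IsCoprime p q := Int.isCoprime_iff_gcd_eq_one.mpr hpq
  have hpq_sq : p * q = s ^ 2 := by
    apply mul_left_cancel₀ two_ne_zero
    linear_combination -hspq
  have hq : q ≠ 0 := by
    rintro rfl
    exact hs (pow_eq_zero_iff two_ne_zero |>.mp (by linear_combination -hpq_sq))
  obtain ⟨u, hu⟩ := exists_sq_eq_pow_four_of_mul_eq_sq (k := s) hpq hpq_sq
  obtain ⟨v, hv⟩ :=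
    exists_sq_eq_pow_four_of_mul_eq_sq (k := s) hpq.symm (by linear_combination hpq_sq)
  refine ⟨u, v, ⟨?_, ?_, ?_⟩, ?_⟩
  · rintro rfl
    exact hq (pow_eq_zero_iff two_ne_zero |>.mp (by linear_combination hv))
  · rintro rfl
    simp at ht
  · linear_combination hv - hu - htpq
  · rw [Int.natAbs_lt_iff_sq_lt]
    calc u ^ 2 ≤ (u ^ 2) ^ 2 := Int.le_self_sq _
      _ = p ^ 2 := by rw [hu]; ring
      _ < p ^ 2 + q ^ 2 := lt_add_of_pos_right _ (by positivity)
      _ = |a| := hapq.symm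
      _ ≤ |a| ^ 2 := Int.le_self_sq _
      _ = a ^ 2 := sq_abs a

/-- `m = 2s²` and `n = t²` up to sign. -/
theorem exists_sq_add_sq_eq_pow_four_add {m n k : ℤ} (hmn : IsCoprime m n) (hm : Even m)
    (hn : Odd n) (hk : k ≠ 0) (h : k ^ 2 = 2 * m * n) :
    ∃ s t, m ^ 2 + n ^ 2 = t ^ 4 + 4 * s ^ 4 ∧ Odd t ∧ IsCoprime t s ∧ s ≠ 0 := by
  obtain ⟨m', rfl⟩ := hm.two_dvd
  have hk_even : Even (k ^ 2) := ⟨2 * m' * n, by linear_combination h⟩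
  obtain ⟨k', rfl⟩ := ((Int.even_pow' two_ne_zero).mp hk_even).two_dvd
  have hmn' : IsCoprime m' n := hmn.of_mul_left_right
  have hprod : m' * n = k' ^ 2 := by
    apply mul_left_cancel₀ (four_ne_zero : (4 : ℤ) ≠ 0)
    linear_combination -h
  obtain ⟨s, hs⟩ := exists_sq_eq_pow_four_of_mul_eq_sq (k := k') hmn' hprod
  obtain ⟨t, ht⟩ :=
    exists_sq_eq_pow_four_of_mul_eq_sq (k := k') hmn'.symm (by linear_combination hprod)
  refine ⟨s, t, by linear_combination 4 * hs + ht, ?_, ?_, ?_⟩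
  · exact (Int.odd_pow' four_ne_zero).mp (ht ▸ hn.pow)
  · have : IsCoprime (s ^ 4) (t ^ 4) := hs ▸ ht ▸ (hmn'.pow : IsCoprime (m' ^ 2) (n ^ 2))
    exact ((IsCoprime.pow_iff four_pos four_pos).mp this).symm
  · rintro rfl
    have hm' : m' = 0 := pow_eq_zero_iff two_ne_zero |>.mp (by linear_combination hs)
    subst hm'
    exact hk (by simpa using hprod.symm)

namespace QuarticDiffSq

variable {a b c : ℤ}

theorem left_ne_zero (h : QuarticDiffSq a b c) : a ≠ 0 := by
  obtain ⟨hb, hc, h⟩ := h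
  rintro rfl
  have : 0 < b ^ 4 + c ^ 2 := by positivity
  linarith

theorem isCoprime_right (h : QuarticDiffSq a b c) (hab : IsCoprime a b) : IsCoprime b c := by
  have hsum : c ^ 2 + b ^ 4 * 1 = a ^ 4 := by linear_combination -h.2.2
  have : IsCoprime (b ^ 4) (c ^ 2 + b ^ 4 * 1) := hsum ▸ hab.symm.pow
  exact (IsCoprime.pow_iff four_pos two_pos).mp this.of_add_mul_left_right

theorem exists_isCoprime (h : QuarticDiffSq a b c) :
    ∃ a' b' c', QuarticDiffSq a' b' c' ∧ IsCoprime a' b' ∧ a'.natAbs ≤ a.natAbs := by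
  obtain ⟨hb, hc, h⟩ := h
  obtain ⟨g, a', b', hg, hcop, rfl, rfl⟩ :=
    Int.exists_gcd_one' (Int.gcd_pos_of_ne_zero_right a hb)
  obtain ⟨c', rfl⟩ : (g : ℤ) ^ 2 ∣ c := by
    rw [← Int.pow_dvd_pow_iff two_ne_zero]
    exact ⟨a' ^ 4 - b' ^ 4, by linear_combination -h⟩
  refine ⟨a', b', c', ⟨?_, ?_, ?_⟩, Int.isCoprime_iff_gcd_eq_one.mpr hcop, ?_⟩
  · rintro rfl
    simp at hb
  · rintro rfl
    simp at hc
  · apply mul_left_cancel₀ (pow_ne_zero 4 (Int.natCast_ne_zero.mpr hg.ne'))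
    linear_combination h
  · rw [Int.natAbs_mul]
    exact Nat.le_mul_of_pos_right _ hg

theorem exists_natAbs_lt_of_odd (h : QuarticDiffSq a b c) (hab : IsCoprime a b) (hb : Odd b) :
    ∃ a' b' c', QuarticDiffSq a' b' c' ∧ a'.natAbs < a.natAbs := by
  have ha := h.left_ne_zero
  have hpyth : PythagoreanTriple (b ^ 2) c (a ^ 2) := by
    unfold PythagoreanTriple
    linear_combination -h.2.2
  obtain ⟨m, n, hbmn, hcmn, hamn, -, -, -⟩ := hpyth.coprime_classification'
    (Int.isCoprime_iff_gcd_eq_one.mp (h.isCoprime_right hab).pow_left)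
    (Int.odd_iff.mp hb.pow) (by positivity)
  have hn : n ≠ 0 := by
    rintro rfl
    exact h.2.1 (by simpa using hcmn)
  refine ⟨m, n, a * b, ⟨hn, mul_ne_zero ha h.1, ?_⟩, ?_⟩
  · linear_combination (-(m ^ 2) - n ^ 2) * hbmn - b ^ 2 * hamn
  · rw [Int.natAbs_lt_iff_sq_lt, hamn]
    exact lt_add_of_pos_right _ (by positivity)

theorem exists_natAbs_lt_of_even (h : QuarticDiffSq a b c) (hab : IsCoprime a b) (hb : Even b) :
    ∃ a' b' c', QuarticDiffSq a' b' c' ∧ a'.natAbs < a.natAbs := by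
  have ha : Odd a := by
    obtain ⟨b', rfl⟩ := hb.two_dvd
    exact Int.isCoprime_two_right.mp hab.of_mul_right_left
  have hc : Odd c :=
    (Int.odd_pow' two_ne_zero).mp (h.2.2 ▸ ha.pow.sub_even (hb.pow_of_ne_zero four_ne_zero))
  have hpyth : PythagoreanTriple c (b ^ 2) (a ^ 2) := by
    unfold PythagoreanTriple
    linear_combination -h.2.2
  obtain ⟨m, n, -, hbmn, hamn, hmn, hparity, -⟩ := hpyth.coprime_classification'
    (Int.isCoprime_iff_gcd_eq_one.mp (h.isCoprime_right hab).symm.pow_right)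
    (Int.odd_iff.mp hc) (sq_pos_of_ne_zero h.left_ne_zero)
  have hmn : IsCoprime m n := Int.isCoprime_iff_gcd_eq_one.mpr hmn
  obtain ⟨s, t, hst, ht, hts, hs⟩ :
      ∃ s t, m ^ 2 + n ^ 2 = t ^ 4 + 4 * s ^ 4 ∧ Odd t ∧ IsCoprime t s ∧ s ≠ 0 := by
    rcases hparity with ⟨hm, hn⟩ | ⟨hm, hn⟩
    · exact exists_sq_add_sq_eq_pow_four_add hmn (Int.even_iff.mpr hm) (Int.odd_iff.mpr hn)
        h.1 hbmn
    · obtain ⟨s, t, hst, hrest⟩ := exists_sq_add_sq_eq_pow_four_add hmn.symm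
        (Int.even_iff.mpr hn) (Int.odd_iff.mpr hm) h.1 (by linear_combination hbmn)
      exact ⟨s, t, by linear_combination hst, hrest⟩
  obtain ⟨u, v, huv, hlt⟩ := exists_quarticDiffSq_of_sq_eq_pow_four_add (hamn.trans hst) ht hts hs
  exact ⟨u, v, t, huv, hlt⟩

theorem exists_natAbs_lt (h : QuarticDiffSq a b c) :
    ∃ a' b' c', QuarticDiffSq a' b' c' ∧ a'.natAbs < a.natAbs := by
  obtain ⟨a₁, b₁, c₁, h₁, hcop, hle⟩ := h.exists_isCoprime
  obtain ⟨a₂, b₂, c₂, h₂, hlt⟩ := (Int.even_or_odd b₁).elim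
    (h₁.exists_natAbs_lt_of_even hcop) (h₁.exists_natAbs_lt_of_odd hcop)
  exact ⟨a₂, b₂, c₂, h₂, hlt.trans_le hle⟩

end QuarticDiffSq

theorem not_quarticDiffSq (a b c : ℤ) : ¬QuarticDiffSq a b c := by
  intro h
  induction hn : a.natAbs using Nat.strong_induction_on generalizing a b c with
  | _ n ih =>
    obtain ⟨a', b', c', h', hlt⟩ := h.exists_natAbs_lt
    exact ih _ (hn ▸ hlt) a' b' c' h' rfl

theorem eq_zero_of_pow_four_sub_one_eq_sq {s r : ℚ} (h : s ^ 4 - 1 = r ^ 2) : r = 0 := by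
  by_contra hr
  -- multiply through by `(s.den * r.den) ^ 4`
  apply not_quarticDiffSq (s.num * r.den) (s.den * r.den) (r.num * s.den ^ 2 * r.den)
  refine ⟨by positivity, by simp [hr], ?_⟩
  qify
  rw [← Rat.mul_den_eq_num s, ← Rat.mul_den_eq_num r]
  linear_combination ((s.den : ℚ) * r.den) ^ 4 * h

/-- `((x² + 1) / 2y)²` is the abscissa of `2P` for `P = (x, y)` on `y² = x³ - x`. -/
theorem pow_four_sub_one_eq_sq_of_sq_eq_cube_sub_self {K : Type*} [Field K] [NeZero (2 : K)]
    {x y : K} (h : y ^ 2 = x ^ 3 - x) (hy : y ≠ 0) :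
    ((x ^ 2 + 1) / (2 * y)) ^ 4 - 1 =
      ((x ^ 2 - 2 * x - 1) * (x ^ 2 + 2 * x - 1) / (2 * y) ^ 2) ^ 2 := by
  field_simp
  linear_combination (-(16 * y ^ 2) - 16 * (x ^ 3 - x)) * h

theorem eq_zero_of_sq_eq_cube_sub_self {x y : ℚ} (h : y ^ 2 = x ^ 3 - x) : y = 0 := by
  by_contra hy
  have hr := eq_zero_of_pow_four_sub_one_eq_sq (pow_four_sub_one_eq_sq_of_sq_eq_cube_sub_self h hy)
  have two_ne_sq (q : ℚ) (hq : q ^ 2 = 2) : False :=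
    (by norm_num : ¬IsSquare (2 : ℚ)) ⟨q, by rw [← hq, sq]⟩
  rw [div_eq_zero_iff, mul_eq_zero] at hr
  rcases hr with (hr | hr) | hr
  · exact two_ne_sq (x - 1) (by linear_combination hr)
  · exact two_ne_sq (x + 1) (by linear_combination hr)
  · exact hy (by simpa using hr)

/-- The set of affine rational points of the elliptic curve
`O₈ : y² = x³ + 12x² + 32x` over `ℚ` consists of exactly three points. -/
theorem stmt_4 :
    {p : ℚ × ℚ | p.2 ^ 2 = p.1 ^ 3 + 12 * p.1 ^ 2 + 32 * p.1} = {(0, 0), (-4, 0), (-8, 0)} := by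
  ext ⟨x, y⟩
  simp only [Set.mem_ofPred_eq, Set.mem_insert_iff, Set.mem_singleton_iff, Prod.mk.injEq]
  constructor
  · intro h
    have hy : y = 0 := by
      simpa using eq_zero_of_sq_eq_cube_sub_self (x := (x + 4) / 4) (y := y / 8)
        (by linear_combination h / 64)
    subst hy
    have hx : x * (x + 4) * (x + 8) = 0 := by linear_combination -h
    simpa [mul_eq_zero, add_eq_zero_iff_eq_neg, or_assoc] using hx
  · rintro (⟨rfl, rfl⟩ | ⟨rfl, rfl⟩ | ⟨rfl, rfl⟩) <;> norm_num
end

section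
/- The set of affine rational points of the elliptic curve O_10 : y^2 = x^3 + 9x^2 + 20x over ℚ consists of exactly three points; that is, {(x, y) ∈ ℚ × ℚ : y^2 = x^3 + 9x^2 + 20x} = {(0, 0), (−4, 0), (−5, 0)}. -/
/-!
The map `(x, y) ↦ ((x + 4)(x + 5)/x, y(x² - 20)/x²)` is a 2-isogeny onto `Y² = X(X² - 18X + 1)`.
Writing `X = p/q` in lowest terms, `p`, `q` and `p² - 18pq + q²` are pairwise coprime with square
product, so `X = a²/b²` and `c² = a⁴ - 18a²b² + b⁴`. Rewriting the quartic as the Pythagorean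
triple `c² + (4ab)² = (a² - b²)²` and splitting its parametrisation along `a` and `b` gives a
solution of `v² = u² + 4e²`, `z² = u² + 5e²` with `|e| ≤ |ab|`; factoring `z² - v² = e²` turns that
back into a solution `(t, s)` of the quartic with `|ts| = |e|/2`. By infinite descent `ab = 0`,
which forces `y = 0`.
-/

theorem Int.sq_emod_sixteen (z : ℤ) :
    z % 2 = 0 ∧ (z ^ 2 % 16 = 0 ∨ z ^ 2 % 16 = 4) ∨
      z % 2 = 1 ∧ (z ^ 2 % 16 = 1 ∨ z ^ 2 % 16 = 9) := by
  have h0 := Int.emod_nonneg z (by norm_num : (16 : ℤ) ≠ 0)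
  have h1 := Int.emod_lt_of_pos z (by norm_num : (0 : ℤ) < 16)
  rw [sq, Int.mul_emod]
  interval_cases h : z % 16 <;> omega

theorem Int.not_even_and_even_of_isCoprime {a b : ℤ} (h : IsCoprime a b) :
    ¬(Even a ∧ Even b) := fun ⟨ha, hb⟩ => by
  simpa [Int.isUnit_iff] using h.isUnit_of_dvd' (even_iff_two_dvd.mp ha) (even_iff_two_dvd.mp hb)

theorem Int.exists_sq_of_isCoprime_of_pos {a b c : ℤ} (h : IsCoprime a b) (heq : a * b = c ^ 2)
    (ha : 0 < a) : ∃ a₀, a = a₀ ^ 2 := by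
  obtain ⟨a₀, h₀ | h₀⟩ := Int.sq_of_isCoprime h heq
  · exact ⟨a₀, h₀⟩
  · nlinarith [sq_nonneg a₀]

theorem not_odd_odd_of_sq_eq_quartic {a b c : ℤ} (ha : Odd a) (hb : Odd b)
    (h : c ^ 2 = a ^ 4 - 18 * a ^ 2 * b ^ 2 + b ^ 4) : False := by
  rw [Int.odd_iff] at ha hb
  have hab : (a * b) % 2 = 1 := by rw [Int.mul_emod, ha, hb]; rfl
  have := Int.sq_emod_sixteen a
  have := Int.sq_emod_sixteen b
  have := Int.sq_emod_sixteen (a * b)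
  have := Int.sq_emod_sixteen c
  obtain ⟨k, hk⟩ : ∃ k, a ^ 2 - b ^ 2 = 8 * k := ⟨(a ^ 2 - b ^ 2) / 8, by omega⟩
  have hc : c ^ 2 = 64 * k ^ 2 - 16 * (a * b) ^ 2 := by
    linear_combination h + (a ^ 2 - b ^ 2 + 8 * k) * hk
  -- so `c² ≡ 48 (mod 64)`, which is not a square
  obtain ⟨d, rfl⟩ : ∃ d, c = 2 * d := ⟨c / 2, by omega⟩
  have := Int.sq_emod_sixteen d
  have : (2 * d) ^ 2 = 4 * d ^ 2 := by ring
  omega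

theorem odd_and_even_of_sq_system {u e v z : ℤ} (hue : IsCoprime u e)
    (hv : v ^ 2 = u ^ 2 + 4 * e ^ 2) (hz : z ^ 2 = u ^ 2 + 5 * e ^ 2) : Odd u ∧ Even e := by
  have := Int.not_even_and_even_of_isCoprime hue
  rw [Int.odd_iff, Int.even_iff]
  rw [Int.even_iff, Int.even_iff] at this
  have := Int.sq_emod_sixteen u
  have := Int.sq_emod_sixteen e
  have := Int.sq_emod_sixteen v
  have := Int.sq_emod_sixteen z
  omega

theorem false_of_sq_twist_five {A₁ A₂ B₁ B₂ : ℤ} (hA₂ : Odd A₂) (hB₂ : Odd B₂)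
    (h₁ : A₂ ^ 2 - 4 * B₁ ^ 2 = 5 * B₂ ^ 2) (h₂ : A₂ ^ 2 + B₁ ^ 2 = 5 * A₁ ^ 2) : False := by
  rw [Int.odd_iff] at hA₂ hB₂
  have := Int.sq_emod_sixteen A₁
  have := Int.sq_emod_sixteen A₂
  have := Int.sq_emod_sixteen B₁
  have := Int.sq_emod_sixteen B₂
  omega

theorem sq_system_of_mul_eq {A₁ A₂ B₁ B₂ : ℤ} (h₁ : IsCoprime A₁ B₂) (h₂ : IsCoprime A₂ B₁)
    (hA₂ : Odd A₂) (hB₂ : Odd B₂)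
    (h : A₁ ^ 2 * (A₂ ^ 2 - 4 * B₁ ^ 2) = B₂ ^ 2 * (A₂ ^ 2 + B₁ ^ 2)) :
    A₂ ^ 2 = B₂ ^ 2 + 4 * B₁ ^ 2 ∧ A₁ ^ 2 = B₂ ^ 2 + 5 * B₁ ^ 2 := by
  obtain ⟨k, hk⟩ : B₂ ^ 2 ∣ A₂ ^ 2 - 4 * B₁ ^ 2 := h₁.pow.symm.dvd_of_dvd_mul_left ⟨_, h⟩
  have hB₂0 : B₂ ≠ 0 := by rintro rfl; simp at hB₂
  have hk' : A₁ ^ 2 * k = A₂ ^ 2 + B₁ ^ 2 :=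
    mul_left_cancel₀ (pow_ne_zero 2 hB₂0) (by rw [← h, hk]; ring)
  -- `k = (A₂² + B₁²) / A₁²` divides `5`; the case `k = 5` is impossible modulo 16.
  have hk5 : k ∣ 5 := by
    obtain ⟨α, β, hαβ⟩ := h₂.pow (m := 2) (n := 2)
    exact ⟨α * (4 * A₁ ^ 2 + B₂ ^ 2) + β * (A₁ ^ 2 - B₂ ^ 2), by
      linear_combination (-5) * hαβ + α * (hk - 4 * hk') - β * (hk' + hk)⟩
  have hk0 : 0 < k := by
    have : A₂ ≠ 0 := by rintro rfl; simp at hA₂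
    refine pos_of_mul_pos_right (a := A₁ ^ 2) ?_ (sq_nonneg _)
    rw [hk']; positivity
  have : k ≤ 5 := Int.le_of_dvd (by norm_num) hk5
  interval_cases k
  · exact ⟨by linear_combination hk, by linear_combination hk' + hk⟩
  all_goals norm_num at hk5
  exact (false_of_sq_twist_five (A₁ := A₁) (B₁ := B₁) hA₂ hB₂ (by linear_combination hk)
    (by linear_combination -hk')).elim

theorem exists_sq_system_of_pythagorean {a b M N : ℤ} (hab : IsCoprime a b) (hMN : IsCoprime M N)
    (hN : Odd N) (ha : a ≠ 0) (hb : b ≠ 0) (hprod : M * N = 2 * (a * b))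
    (hsum : a ^ 2 - b ^ 2 = M ^ 2 + N ^ 2) :
    ∃ u e v z : ℤ, IsCoprime u e ∧ e ≠ 0 ∧ e.natAbs ≤ (a * b).natAbs ∧
      v ^ 2 = u ^ 2 + 4 * e ^ 2 ∧ z ^ 2 = u ^ 2 + 5 * e ^ 2 := by
  have hNab : N ∣ a * b :=
    (Int.isCoprime_two_right.mpr hN).dvd_of_dvd_mul_right ⟨M, by linear_combination -hprod⟩
  obtain ⟨A₂, B₂, ⟨A₁, rfl⟩, ⟨B₁, rfl⟩, rfl⟩ := exists_dvd_and_dvd_of_dvd_mul hNab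
  obtain ⟨hA₂, hB₂⟩ := Int.odd_mul.mp hN
  have hN0 : A₂ * B₂ ≠ 0 := by rintro h; simp [h] at hN
  obtain rfl : M = 2 * A₁ * B₁ :=
    mul_right_cancel₀ hN0 (by linear_combination hprod)
  obtain ⟨hv, hz⟩ := sq_system_of_mul_eq hab.of_mul_left_right.of_mul_right_left
    hab.of_mul_left_left.of_mul_right_right hA₂ hB₂ (by linear_combination hsum)
  refine ⟨B₂, B₁, A₂, A₁, hMN.of_mul_left_right.of_mul_right_right.symm, right_ne_zero_of_mul hb,
    Int.natAbs_le_of_dvd_ne_zero (Dvd.intro_left _ rfl |>.mul_left _) (mul_ne_zero ha hb), hv, hz⟩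

theorem exists_sq_system_of_sq_eq_quartic {a b c : ℤ} (hab : IsCoprime a b) (ha : a ≠ 0)
    (hb : b ≠ 0) (h : c ^ 2 = a ^ 4 - 18 * a ^ 2 * b ^ 2 + b ^ 4) :
    ∃ u e v z : ℤ, IsCoprime u e ∧ e ≠ 0 ∧ e.natAbs ≤ (a * b).natAbs ∧
      v ^ 2 = u ^ 2 + 4 * e ^ 2 ∧ z ^ 2 = u ^ 2 + 5 * e ^ 2 := by
  wlog hlt : b ^ 2 < a ^ 2 generalizing a b
  · obtain hlt | heq := (show a ^ 2 ≤ b ^ 2 from not_lt.mp hlt).lt_or_eq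
    · simpa only [mul_comm b a] using this hab.symm hb ha (by linear_combination h) hlt
    · have : 0 < (a ^ 2) ^ 2 := by positivity
      nlinarith [sq_nonneg c]
  have hc : Odd c := by
    have hodd : ¬(Odd a ∧ Odd b) := fun ⟨ha, hb⟩ => not_odd_odd_of_sq_eq_quartic ha hb h
    have heven := Int.not_even_and_even_of_isCoprime hab
    have := congrArg Even h
    simp [parity_simps, show Even (18 : ℤ) by decide, ← Int.not_even_iff_odd] at this hodd heven ⊢
    tauto
  have hca : IsCoprime c a := by
    rw [← IsCoprime.pow_left_iff two_pos,
      show c ^ 2 = b ^ 4 + a * (a ^ 3 - 18 * a * b ^ 2) by linear_combination h]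
    exact hab.symm.pow_left.add_mul_left_left _
  have hcb : IsCoprime c b := by
    rw [← IsCoprime.pow_left_iff two_pos,
      show c ^ 2 = a ^ 4 + b * (b ^ 3 - 18 * a ^ 2 * b) by linear_combination h]
    exact hab.pow_left.add_mul_left_left _
  have hc4 : IsCoprime c 4 := by
    simpa using (Int.isCoprime_two_right.mpr hc).pow_right (n := 2)
  have hpyth : PythagoreanTriple c (4 * (a * b)) (a ^ 2 - b ^ 2) := by
    unfold PythagoreanTriple
    linear_combination h
  obtain ⟨m, n, -, hmn, hsum, hgcd, hpar, -⟩ := hpyth.coprime_classification'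
    (Int.isCoprime_iff_gcd_eq_one.mp (hc4.mul_right (hca.mul_right hcb)))
    (Int.odd_iff.mp hc) (sub_pos.mpr hlt)
  have hcop := Int.isCoprime_iff_gcd_eq_one.mpr hgcd
  rcases hpar with ⟨-, hn⟩ | ⟨hm, -⟩
  · exact exists_sq_system_of_pythagorean hab hcop (Int.odd_iff.mpr hn) ha hb
      (by linarith) hsum
  · exact exists_sq_system_of_pythagorean hab hcop.symm (Int.odd_iff.mpr hm) ha hb
      (by linarith) (by linear_combination hsum)

theorem exists_sq_eq_quartic_of_sq_system {u e v z : ℤ} (hue : IsCoprime u e) (he : e ≠ 0)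
    (hv : v ^ 2 = u ^ 2 + 4 * e ^ 2) (hz : z ^ 2 = u ^ 2 + 5 * e ^ 2) :
    ∃ t s w : ℤ, IsCoprime t s ∧ t ≠ 0 ∧ s ≠ 0 ∧ (t * s).natAbs < e.natAbs ∧
      w ^ 2 = t ^ 4 - 18 * t ^ 2 * s ^ 2 + s ^ 4 := by
  wlog hv0 : 0 ≤ v generalizing v
  · exact this (v := -v) (by linear_combination hv) (by linarith)
  wlog hz0 : 0 ≤ z generalizing z
  · exact this (z := -z) (by linear_combination hz) (by linarith)
  have hzv : IsCoprime z v := by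
    obtain ⟨α, β, hαβ⟩ := hue.pow (m := 2) (n := 2)
    exact ⟨(β - 4 * α) * z, (5 * α - β) * v,
      by linear_combination hαβ + (5 * α - β) * hv + (β - 4 * α) * hz⟩
  obtain ⟨hu, f, rfl⟩ := odd_and_even_of_sq_system hue hv hz
  have := Int.sq_emod_sixteen u
  have := Int.sq_emod_sixteen v
  have := Int.sq_emod_sixteen z
  rw [Int.odd_iff] at hu
  obtain ⟨P, Q, rfl, rfl⟩ : ∃ P Q, z = Q + P ∧ v = Q - P :=
    ⟨(z - v) / 2, (z + v) / 2, by omega, by omega⟩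
  have hPQ : P * Q = f ^ 2 := by
    have : 4 * (P * Q) = 4 * f ^ 2 := by linear_combination hz - hv
    linarith
  have hP : 0 < P := by
    have : (Q - P) ^ 2 < (Q + P) ^ 2 := by nlinarith [sq_pos_of_ne_zero he]
    linarith [lt_of_pow_lt_pow_left₀ 2 hz0 this]
  have hcop : IsCoprime P Q := by
    obtain ⟨α, β, hαβ⟩ := hzv
    exact ⟨α - β, α + β, by linear_combination hαβ⟩
  obtain ⟨s, rfl⟩ := Int.exists_sq_of_isCoprime_of_pos hcop hPQ hP
  obtain ⟨t, rfl⟩ := Int.exists_sq_of_isCoprime_of_pos hcop.symm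
    (by linear_combination hPQ : Q * s ^ 2 = f ^ 2) (by linarith)
  have hs : s ≠ 0 := by rintro rfl; simp at hP
  have ht : t ≠ 0 := by rintro rfl; linarith
  refine ⟨t, s, u, (IsCoprime.pow_iff two_pos two_pos).mp hcop.symm, ht, hs, ?_, ?_⟩
  · have : (t * s).natAbs = f.natAbs := Int.natAbs_eq_iff_sq_eq.mpr (by linear_combination hPQ)
    have : f ≠ 0 := by rintro rfl; simp at he
    omega
  · linear_combination -hv + 16 * hPQ

theorem eq_zero_or_eq_zero_of_sq_eq_quartic {a b c : ℤ} (hab : IsCoprime a b)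
    (h : c ^ 2 = a ^ 4 - 18 * a ^ 2 * b ^ 2 + b ^ 4) : a = 0 ∨ b = 0 := by
  induction hn : (a * b).natAbs using Nat.strong_induction_on generalizing a b c with
  | _ n ih =>
  by_contra! hab0
  obtain ⟨u, e, v, z, hue, he, hle, hv, hz⟩ :=
    exists_sq_system_of_sq_eq_quartic hab hab0.1 hab0.2 h
  obtain ⟨t, s, w, hts, ht, hs, hlt, hw⟩ := exists_sq_eq_quartic_of_sq_system hue he hv hz
  exact (ih _ (by omega) hts hw rfl).elim ht hs

theorem exists_sq_eq_quartic_of_rat_point {X Y : ℚ} (hX : X ≠ 0)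
    (h : Y ^ 2 = X ^ 3 - 18 * X ^ 2 + X) :
    ∃ a b c : ℤ, IsCoprime a b ∧ a ≠ 0 ∧ b ≠ 0 ∧ c ^ 2 = a ^ 4 - 18 * a ^ 2 * b ^ 2 + b ^ 4 := by
  obtain ⟨p, q, hq, hpq, rfl⟩ : ∃ p q : ℤ, 0 < q ∧ IsCoprime p q ∧ X = p / q :=
    ⟨X.num, X.den, by simp [X.pos], Int.isCoprime_iff_gcd_eq_one.mpr X.reduced,
      (Rat.num_div_den X).symm⟩
  have hp0 : p ≠ 0 := by rintro rfl; simp at hX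
  obtain ⟨n, hn⟩ : IsSquare (p * q * (p ^ 2 - 18 * p * q + q ^ 2)) := by
    refine Rat.isSquare_intCast_iff.mp ⟨Y * q ^ 2, ?_⟩
    field_simp at h
    push_cast
    linear_combination -(q : ℚ) * h
  set M := p ^ 2 - 18 * p * q + q ^ 2 with hM
  have hpM : IsCoprime p M := by
    rw [show M = q ^ 2 + p * (p - 18 * q) by ring]
    exact hpq.pow_right.add_mul_left_right _
  have hqM : IsCoprime q M := by
    rw [show M = p ^ 2 + q * (q - 18 * p) by ring]
    exact hpq.symm.pow_right.add_mul_left_right _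
  have hp : 0 < p := by
    by_contra! hp
    have hp : p < 0 := lt_of_le_of_ne hp hp0
    have hM0 : 0 < M := by nlinarith [mul_pos (neg_pos.mpr hp) hq]
    nlinarith [mul_neg_of_neg_of_pos (mul_neg_of_neg_of_pos hp hq) hM0, mul_self_nonneg n]
  obtain ⟨a, rfl⟩ := Int.exists_sq_of_isCoprime_of_pos (hpq.mul_right hpM)
    (by linear_combination hn : p * (q * M) = n ^ 2) hp
  obtain ⟨b, rfl⟩ := Int.exists_sq_of_isCoprime_of_pos (hpq.symm.mul_right hqM)
    (by linear_combination hn : q * (a ^ 2 * M) = n ^ 2) hq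
  have ha0 : a ≠ 0 := by rintro rfl; simp at hp
  have hb0 : b ≠ 0 := by rintro rfl; simp at hq
  obtain ⟨c, rfl⟩ := (Int.pow_dvd_pow_iff two_ne_zero).mp
    (⟨M, by linear_combination -hn⟩ : (a * b) ^ 2 ∣ n ^ 2)
  refine ⟨a, b, c, (IsCoprime.pow_iff two_pos two_pos).mp hpq, ha0, hb0, ?_⟩
  exact mul_left_cancel₀ (pow_ne_zero 2 (mul_ne_zero ha0 hb0))
    (by linear_combination -hn + (a * b) ^ 2 * hM)

theorem mem_isogenous_curve {x y : ℚ} (hx : x ≠ 0) (h : y ^ 2 = x ^ 3 + 9 * x ^ 2 + 20 * x) :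
    (y * (x ^ 2 - 20) / x ^ 2) ^ 2 =
      ((x + 4) * (x + 5) / x) ^ 3 - 18 * ((x + 4) * (x + 5) / x) ^ 2 + (x + 4) * (x + 5) / x := by
  field_simp
  linear_combination (x ^ 2 - 20) ^ 2 * h

/-- The set of affine rational points of the elliptic curve
`O₁₀ : y² = x³ + 9x² + 20x` over `ℚ` consists of exactly three points. -/
theorem stmt_5 :
    {p : ℚ × ℚ | p.2 ^ 2 = p.1 ^ 3 + 9 * p.1 ^ 2 + 20 * p.1} = {(0, 0), (-4, 0), (-5, 0)} := by
  ext ⟨x, y⟩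
  simp only [Set.mem_ofPred_eq, Set.mem_insert_iff, Set.mem_singleton_iff, Prod.mk.injEq]
  constructor
  · intro h
    obtain rfl : y = 0 := by
      by_contra hy
      have hx : x * ((x + 4) * (x + 5)) ≠ 0 := by
        contrapose! hy
        exact pow_eq_zero_iff two_ne_zero |>.mp (by linear_combination h + hy)
      obtain ⟨a, b, c, hab, ha, hb, hc⟩ := exists_sq_eq_quartic_of_rat_point
        (div_ne_zero (right_ne_zero_of_mul hx) (left_ne_zero_of_mul hx))
        (mem_isogenous_curve (left_ne_zero_of_mul hx) h)
      exact (eq_zero_or_eq_zero_of_sq_eq_quartic hab hc).elim ha hb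
    have : x * (x + 4) * (x + 5) = 0 := by linear_combination -h
    simp only [mul_eq_zero, add_eq_zero_iff_eq_neg] at this
    tauto
  · rintro (⟨rfl, rfl⟩ | ⟨rfl, rfl⟩ | ⟨rfl, rfl⟩) <;> norm_num
end

section
/- The set of affine rational points of the elliptic curve O_16 : y^2 = x^3 + 6x^2 + 8x over ℚ consists of exactly three points; that is, {(x, y) ∈ ℚ × ℚ : y^2 = x^3 + 6x^2 + 8x} = {(0, 0), (−2, 0), (−4, 0)}. -/
lemma aux_odd_sq8 {s : ℤ} (h : Odd s) : ∃ k, s ^ 2 = 8 * k + 1 := by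
  obtain ⟨m, rfl⟩ := h
  obtain ⟨t, ht⟩ := Int.even_mul_succ_self m
  exact ⟨t, by rw [show (2*m+1)^2 = 4*(m*(m+1)) + 1 by ring, show m*(m+1) = t + t from ht]; ring⟩

lemma aux_coprime_two {a : ℤ} (h : Odd a) : IsCoprime a 2 := by
  obtain ⟨m, rfl⟩ := h
  exact ⟨1, -m, by ring⟩

lemma aux_odd_of_sq {s X : ℤ} (hX : Odd X) (h : X = s ^ 2 ∨ X = -s ^ 2) :
    ∃ k, s ^ 2 = 8 * k + 1 := by
  apply aux_odd_sq8
  rcases Int.even_or_odd s with he | ho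
  · exfalso
    obtain ⟨m, rfl⟩ := he
    rw [show ((m+m):ℤ)^2 = 4*(m*m) by ring] at h
    obtain ⟨t, ht⟩ := hX
    rcases h with h | h <;> omega
  · exact ho

lemma aux_cop {X Y x y : ℤ} (h : IsCoprime X Y) (hx : X = x ^ 2 ∨ X = -x ^ 2)
    (hy : Y = y ^ 2 ∨ Y = -y ^ 2) : IsCoprime x y := by
  have hdx : x ∣ X := by
    rcases hx with h' | h'
    · exact ⟨x, by rw [h']; ring⟩
    · exact ⟨-x, by rw [h']; ring⟩
  have hdy : y ∣ Y := by
    rcases hy with h' | h'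
    · exact ⟨y, by rw [h']; ring⟩
    · exact ⟨-y, by rw [h']; ring⟩
  exact (h.of_isCoprime_of_dvd_left hdx).of_isCoprime_of_dvd_right hdy

lemma aux_half {b k : ℤ} (h : b ^ 2 = 4 * k) : ∃ B, b = 2 * B ∧ B ^ 2 = k := by
  have h2 : Even b := by
    have he : Even (b ^ 2) := by rw [Int.even_iff]; omega
    exact (Int.even_pow.mp he).1
  obtain ⟨B, hB⟩ := h2
  refine ⟨B, by omega, ?_⟩
  have h' : 4 * B ^ 2 = 4 * k := by rw [show (4:ℤ) * B ^ 2 = (B + B) ^ 2 by ring, ← hB]; exact h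
  omega

lemma aux_three {X Y Z b : ℤ} (hb : b ≠ 0) (hXY : IsCoprime X Y) (hXZ : IsCoprime X Z)
    (hYZ : IsCoprime Y Z) (h : X * Y * Z = b ^ 2) :
    ∃ x y z : ℤ,
      (X = x ^ 2 ∧ Y = y ^ 2 ∧ Z = z ^ 2) ∨ (X = x ^ 2 ∧ Y = -y ^ 2 ∧ Z = -z ^ 2) ∨
      (X = -x ^ 2 ∧ Y = y ^ 2 ∧ Z = -z ^ 2) ∨ (X = -x ^ 2 ∧ Y = -y ^ 2 ∧ Z = z ^ 2) := by
  have hbpos : 0 < b ^ 2 := by positivity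
  obtain ⟨x, hx⟩ := Int.sq_of_isCoprime (hXY.mul_right hXZ) (show X * (Y * Z) = b ^ 2 by linear_combination h)
  obtain ⟨y, hy⟩ := Int.sq_of_isCoprime (hXY.symm.mul_right hYZ) (show Y * (X * Z) = b ^ 2 by linear_combination h)
  obtain ⟨z, hz⟩ := Int.sq_of_isCoprime (hXZ.symm.mul_right hYZ.symm) (show Z * (X * Y) = b ^ 2 by linear_combination h)
  refine ⟨x, y, z, ?_⟩
  rcases hx with hx | hx <;> rcases hy with hy | hy <;> rcases hz with hz | hz <;>
    rw [hx, hy, hz] at h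
  · exact Or.inl ⟨hx, hy, hz⟩
  · exact absurd h (by nlinarith [sq_nonneg (x*y*z)])
  · exact absurd h (by nlinarith [sq_nonneg (x*y*z)])
  · exact Or.inr (Or.inl ⟨hx, hy, hz⟩)
  · exact absurd h (by nlinarith [sq_nonneg (x*y*z)])
  · exact Or.inr (Or.inr (Or.inl ⟨hx, hy, hz⟩))
  · exact Or.inr (Or.inr (Or.inr ⟨hx, hy, hz⟩))
  · exact absurd h (by nlinarith [sq_nonneg (x*y*z)])

lemma aux_both_odd {s u c : ℤ} (hcop : IsCoprime s u) (h1 : s ^ 2 + u ^ 2 = 2 * c ^ 2) :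
    Odd s ∧ Odd u := by
  rcases Int.even_or_odd s with hs | hs <;> rcases Int.even_or_odd u with hu | hu
  · exfalso
    obtain ⟨m, rfl⟩ := hs; obtain ⟨n, rfl⟩ := hu
    have := hcop.isUnit_of_dvd' (show (2:ℤ) ∣ m + m from ⟨m, by ring⟩)
      (show (2:ℤ) ∣ n + n from ⟨n, by ring⟩)
    rw [Int.isUnit_iff] at this; omega
  · exfalso
    obtain ⟨m, rfl⟩ := hs
    rw [show (m+m)^2 = 4*(m*m) by ring] at h1
    have h2 : Even (u ^ 2) := by rw [Int.even_iff]; omega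
    rw [Int.even_pow] at h2
    exact (Int.not_odd_iff_even.mpr h2.1) hu
  · exfalso
    obtain ⟨m, rfl⟩ := hu
    rw [show (m+m)^2 = 4*(m*m) by ring] at h1
    have h2 : Even (s ^ 2) := by rw [Int.even_iff]; omega
    rw [Int.even_pow] at h2
    exact (Int.not_odd_iff_even.mpr h2.1) hs
  · exact ⟨hs, hu⟩

/-- Key Fermat-descent lemma. -/
lemma aux_key {s u c e : ℤ} (hcop : IsCoprime s u) (h1 : s ^ 2 + u ^ 2 = 2 * c ^ 2)
    (h2 : s ^ 2 - u ^ 2 = 4 * e ^ 2) (he : e ≠ 0) : False := by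
  obtain ⟨hsodd, huodd⟩ := aux_both_odd hcop h1
  obtain ⟨m, hm⟩ := hsodd
  obtain ⟨n, hn⟩ := huodd
  set p : ℤ := m + n + 1 with hp
  set q : ℤ := m - n with hq
  have hs : s = p + q := by omega
  have hu : u = p - q := by omega
  rw [hs, hu] at h1 h2
  have hpq : p * q = e ^ 2 := by linarith [show (p+q)^2 - (p-q)^2 = 4*(p*q) from by ring]
  have hppqq : p ^ 2 + q ^ 2 = c ^ 2 := by
    linarith [show (p+q)^2 + (p-q)^2 = 2*(p^2 + q^2) from by ring]
  have hcop' : IsCoprime p q := by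
    obtain ⟨x, y, hxy⟩ := hcop
    rw [hs, hu] at hxy
    exact ⟨x + y, x - y, by linear_combination hxy⟩
  obtain ⟨m1, hm1⟩ := Int.sq_of_isCoprime hcop' hpq
  obtain ⟨n1, hn1⟩ := Int.sq_of_isCoprime hcop'.symm (by rw [mul_comm]; exact hpq)
  have hp2 : p ^ 2 = m1 ^ 4 := by rcases hm1 with h | h <;> rw [h] <;> ring
  have hq2 : q ^ 2 = n1 ^ 4 := by rcases hn1 with h | h <;> rw [h] <;> ring
  have hm1ne : m1 ≠ 0 := by
    rintro rfl
    have h0 : p = 0 := by rcases hm1 with h | h <;> simpa using h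
    rw [h0] at hpq; simp at hpq; exact he (sq_eq_zero_iff.mp hpq.symm)
  have hn1ne : n1 ≠ 0 := by
    rintro rfl
    have h0 : q = 0 := by rcases hn1 with h | h <;> simpa using h
    rw [h0] at hpq; simp at hpq; exact he (sq_eq_zero_iff.mp hpq.symm)
  exact not_fermat_42 hm1ne hn1ne (show m1^4 + n1^4 = c^2 by rw [← hp2, ← hq2]; exact hppqq)

/-- Main integral descent: no nontrivial points. -/
lemma aux_main (a b c : ℤ) (hac : IsCoprime a c) (hc : c ≠ 0) (hb : b ≠ 0)
    (heq : a * (a + 2 * c ^ 2) * (a + 4 * c ^ 2) = b ^ 2) : False := by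
  have hcsq : 0 < c ^ 2 := by positivity
  rcases Int.even_or_odd a with hAe | haodd
  · -- a even
    obtain ⟨A, hA⟩ := hAe
    have ha2 : a = 2 * A := by omega
    clear hA; subst ha2
    have hcodd : Odd c := by
      rcases Int.even_or_odd c with hce | hco
      · exfalso
        obtain ⟨m, hm⟩ := hce
        have := hac.isUnit_of_dvd' (show (2:ℤ) ∣ 2 * A from ⟨A, rfl⟩)
          (show (2:ℤ) ∣ c from ⟨m, by omega⟩)
        rw [Int.isUnit_iff] at this; omega
      · exact hco
    obtain ⟨kc, hkc⟩ := aux_odd_sq8 hcodd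
    have hAc : IsCoprime A c := hac.of_isCoprime_of_dvd_left ⟨2, by ring⟩
    have h2c : IsCoprime 2 c := (aux_coprime_two hcodd).symm
    have heq8 : b ^ 2 = 4 * (2 * (A * (A + c ^ 2) * (A + 2 * c ^ 2))) := by linear_combination -heq
    obtain ⟨B, hbB, hB⟩ := aux_half heq8
    have hBne : B ≠ 0 := by rintro rfl; omega
    rcases Int.even_or_odd A with hAe2 | hAodd
    · -- A even : a = 4D
      obtain ⟨D, hD⟩ := hAe2
      have hA2 : A = 2 * D := by omega
      clear hD; subst hA2
      have hDc : IsCoprime D c := hAc.of_isCoprime_of_dvd_left ⟨2, by ring⟩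
      have hB4 : B ^ 2 = 4 * (2 * (D * (2 * D + c ^ 2) * (D + c ^ 2))) := by linear_combination hB
      obtain ⟨B1, hBB1, hB1⟩ := aux_half hB4
      have hB1ne : B1 ≠ 0 := by rintro rfl; omega
      rcases Int.even_or_odd D with hDe | hDodd
      · -- D even : D = 2F
        obtain ⟨F, hF⟩ := hDe
        have hD2 : D = 2 * F := by omega
        clear hF; subst hD2
        have hFc : IsCoprime F c := hDc.of_isCoprime_of_dvd_left ⟨2, by ring⟩
        have hB1' : B1 ^ 2 = 4 * (F * (2 * F + c ^ 2) * (4 * F + c ^ 2)) := by linear_combination hB1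
        obtain ⟨G, hG1, hG⟩ := aux_half hB1'
        have hGne : G ≠ 0 := by rintro rfl; omega
        have hYodd : Odd (2 * F + c ^ 2) := ⟨F + 4 * kc, by omega⟩
        have hZodd : Odd (4 * F + c ^ 2) := ⟨2 * F + 4 * kc, by omega⟩
        have hXY : IsCoprime F (2 * F + c ^ 2) := by
          have := (hFc.pow_right (n := 2)).add_mul_left_right 2
          rwa [show c ^ 2 + F * 2 = 2 * F + c ^ 2 by ring] at this
        have hXZ : IsCoprime F (4 * F + c ^ 2) := by
          have := (hFc.pow_right (n := 2)).add_mul_left_right 4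
          rwa [show c ^ 2 + F * 4 = 4 * F + c ^ 2 by ring] at this
        have hYZ : IsCoprime (2 * F + c ^ 2) (4 * F + c ^ 2) := by
          have := ((aux_coprime_two hYodd).mul_right hXY.symm).add_mul_left_right 1
          rwa [show 2 * F + (2 * F + c ^ 2) * 1 = 4 * F + c ^ 2 by ring] at this
        obtain ⟨f, g, h', H⟩ := aux_three hGne hXY hXZ hYZ hG.symm
        have hFne : F ≠ 0 := by
          rintro h0
          apply hGne
          have : G ^ 2 = 0 := by rw [hG, h0]; ring
          exact sq_eq_zero_iff.mp this
        rcases H with ⟨h1, h2, h3⟩ | ⟨h1, h2, h3⟩ | ⟨h1, h2, h3⟩ | ⟨h1, h2, h3⟩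
        · -- (+,+,+) : Fermat
          have hcophc : IsCoprime h' c := by
            have s1 : IsCoprime (2 * (2 * F)) c := h2c.mul_left (h2c.mul_left hFc)
            have s2 : IsCoprime (4 * F) c := by rwa [show (2:ℤ) * (2 * F) = 4 * F by ring] at s1
            have s3 := s2.add_mul_right_left c
            rw [show 4 * F + c * c = 4 * F + c ^ 2 by ring] at s3
            exact s3.of_isCoprime_of_dvd_left ⟨h', by rw [h3]; ring⟩
          have hfne : f ≠ 0 := by rintro rfl; exact hFne (by simpa using h1)
          exact aux_key (c := g) (e := f) hcophc (by omega) (by omega) hfne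
        · -- (+,-,-) : positivity
          have := sq_nonneg f; have := sq_nonneg g; omega
        · -- (-,+,-) : mod 8
          obtain ⟨k2, hk2⟩ := aux_odd_of_sq hYodd (Or.inl h2)
          obtain ⟨k3, hk3⟩ := aux_odd_of_sq hZodd (Or.inr h3)
          omega
        · -- (-,-,+) : sum of squares zero, but Z odd
          obtain ⟨k3, hk3⟩ := aux_odd_of_sq hZodd (Or.inl h3)
          have := sq_nonneg f; have := sq_nonneg g; have := sq_nonneg h'; omega
      · -- D odd
        obtain ⟨md, hmd⟩ := hDodd
        obtain ⟨E, hE⟩ : ∃ E, D + c ^ 2 = 2 * E := ⟨md + 4 * kc + 1, by omega⟩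
        have hB1' : B1 ^ 2 = 4 * (D * E * (2 * D + c ^ 2)) := by
          linear_combination hB1 + 2 * D * (2 * D + c ^ 2) * hE
        obtain ⟨G, hG1, hG⟩ := aux_half hB1'
        have hGne : G ≠ 0 := by rintro rfl; omega
        have hDodd' : Odd D := ⟨md, hmd⟩
        have hZodd : Odd (2 * D + c ^ 2) := ⟨D + 4 * kc, by omega⟩
        have hXDE : IsCoprime D (D + c ^ 2) := by
          have := (hDc.pow_right (n := 2)).add_mul_left_right 1
          rwa [show c ^ 2 + D * 1 = D + c ^ 2 by ring] at this
        have hXY : IsCoprime D E := hXDE.of_isCoprime_of_dvd_right ⟨2, by omega⟩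
        have hXZ : IsCoprime D (2 * D + c ^ 2) := by
          have := (hDc.pow_right (n := 2)).add_mul_left_right 2
          rwa [show c ^ 2 + D * 2 = 2 * D + c ^ 2 by ring] at this
        have hYZ : IsCoprime E (2 * D + c ^ 2) := by
          have s1 := hXDE.symm.add_mul_left_right 1
          rw [show D + (D + c ^ 2) * 1 = 2 * D + c ^ 2 by ring] at s1
          exact s1.of_isCoprime_of_dvd_left ⟨2, by omega⟩
        obtain ⟨s, e, u, H⟩ := aux_three hGne hXY hXZ hYZ hG.symm
        have hEne : E ≠ 0 := by
          rintro h0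
          apply hGne
          have : G ^ 2 = 0 := by rw [hG, h0]; ring
          exact sq_eq_zero_iff.mp this
        rcases H with ⟨h1, h2, h3⟩ | ⟨h1, h2, h3⟩ | ⟨h1, h2, h3⟩ | ⟨h1, h2, h3⟩
        · -- (+,+,+) : mod 8
          obtain ⟨k1, hk1⟩ := aux_odd_of_sq hDodd' (Or.inl h1)
          obtain ⟨k3, hk3⟩ := aux_odd_of_sq hZodd (Or.inl h3)
          omega
        · -- (+,-,-) : positivity
          have := sq_nonneg s; have := sq_nonneg u; omega
        · -- (-,+,-) : Fermat with (c, u)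
          have hcopcu : IsCoprime c u := by
            have s1 : IsCoprime (2 * D) c := h2c.mul_left hDc
            have s2 := s1.add_mul_right_left c
            rw [show 2 * D + c * c = 2 * D + c ^ 2 by ring] at s2
            exact (s2.of_isCoprime_of_dvd_left ⟨-u, by rw [h3]; ring⟩).symm
          have hene : e ≠ 0 := by rintro rfl; exact hEne (by simpa using h2)
          exact aux_key (c := s) (e := e) hcopcu (by omega) (by omega) hene
        · -- (-,-,+) : sum of squares zero, Z odd
          obtain ⟨k3, hk3⟩ := aux_odd_of_sq hZodd (Or.inl h3)
          have := sq_nonneg s; have := sq_nonneg e; have := sq_nonneg u; omega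
    · -- A odd
      obtain ⟨ma, hma⟩ := hAodd
      obtain ⟨E, hE⟩ : ∃ E, A + c ^ 2 = 2 * E := ⟨ma + 4 * kc + 1, by omega⟩
      have hB' : B ^ 2 = 4 * (A * E * (A + 2 * c ^ 2)) := by
        linear_combination hB + 2 * A * (A + 2 * c ^ 2) * hE
      obtain ⟨G, hG1, hG⟩ := aux_half hB'
      have hGne : G ≠ 0 := by rintro rfl; omega
      have hAodd' : Odd A := ⟨ma, hma⟩
      have hZodd : Odd (A + 2 * c ^ 2) := ⟨ma + 8 * kc + 1, by omega⟩
      have hXAE : IsCoprime A (A + c ^ 2) := by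
        have := (hAc.pow_right (n := 2)).add_mul_left_right 1
        rwa [show c ^ 2 + A * 1 = A + c ^ 2 by ring] at this
      have hXY : IsCoprime A E := hXAE.of_isCoprime_of_dvd_right ⟨2, by omega⟩
      have hXZ : IsCoprime A (A + 2 * c ^ 2) := by
        have := ((aux_coprime_two hAodd').mul_right (hAc.pow_right (n := 2))).add_mul_left_right 1
        rwa [show 2 * c ^ 2 + A * 1 = A + 2 * c ^ 2 by ring] at this
      have hYZ : IsCoprime E (A + 2 * c ^ 2) := by
        have s0 := hAc.add_mul_right_left c
        rw [show A + c * c = A + c ^ 2 by ring] at s0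
        have s1 := (s0.pow_right (n := 2)).add_mul_left_right 1
        rw [show c ^ 2 + (A + c ^ 2) * 1 = A + 2 * c ^ 2 by ring] at s1
        exact s1.of_isCoprime_of_dvd_left ⟨2, by omega⟩
      obtain ⟨s, e, u, H⟩ := aux_three hGne hXY hXZ hYZ hG.symm
      have hEne : E ≠ 0 := by
        rintro h0
        apply hGne
        have : G ^ 2 = 0 := by rw [hG, h0]; ring
        exact sq_eq_zero_iff.mp this
      rcases H with ⟨h1, h2, h3⟩ | ⟨h1, h2, h3⟩ | ⟨h1, h2, h3⟩ | ⟨h1, h2, h3⟩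
      · -- (+,+,+) : mod 8
        obtain ⟨k1, hk1⟩ := aux_odd_of_sq hAodd' (Or.inl h1)
        obtain ⟨k3, hk3⟩ := aux_odd_of_sq hZodd (Or.inl h3)
        omega
      · -- (+,-,-) : positivity
        have := sq_nonneg s; have := sq_nonneg u; omega
      · -- (-,+,-) : sum of squares zero, Z odd
        obtain ⟨k3, hk3⟩ := aux_odd_of_sq hZodd (Or.inr h3)
        have := sq_nonneg s; have := sq_nonneg e; have := sq_nonneg u; omega
      · -- (-,-,+) : Fermat with (s, u)
        have hcopsu : IsCoprime s u := aux_cop hXZ (Or.inr h1) (Or.inl h3)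
        have hene : e ≠ 0 := by rintro rfl; exact hEne (by simpa using h2)
        exact aux_key (c := c) (e := e) hcopsu (by omega) (by omega) hene
  · -- a odd
    have h2a : IsCoprime a 2 := aux_coprime_two haodd
    have hXY : IsCoprime a (a + 2 * c ^ 2) := by
      have := (h2a.mul_right (hac.pow_right (n := 2))).add_mul_left_right 1
      rwa [show 2 * c ^ 2 + a * 1 = a + 2 * c ^ 2 by ring] at this
    have hXZ : IsCoprime a (a + 4 * c ^ 2) := by
      have := (h2a.mul_right (h2a.mul_right (hac.pow_right (n := 2)))).add_mul_left_right 1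
      rwa [show 2 * (2 * c ^ 2) + a * 1 = a + 4 * c ^ 2 by ring] at this
    obtain ⟨ma, hma⟩ := haodd
    have haodd' : Odd a := ⟨ma, hma⟩
    have hYodd : Odd (a + 2 * c ^ 2) := ⟨ma + c ^ 2, by omega⟩
    have hZodd : Odd (a + 4 * c ^ 2) := ⟨ma + 2 * c ^ 2, by omega⟩
    have hYZ : IsCoprime (a + 2 * c ^ 2) (a + 4 * c ^ 2) := by
      have s0 := hac.add_mul_right_left (2 * c)
      rw [show a + 2 * c * c = a + 2 * c ^ 2 by ring] at s0
      have s1 := ((aux_coprime_two hYodd).mul_right (s0.pow_right (n := 2))).add_mul_left_right 1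
      rwa [show 2 * c ^ 2 + (a + 2 * c ^ 2) * 1 = a + 4 * c ^ 2 by ring] at s1
    obtain ⟨s, t, u, H⟩ := aux_three hb hXY hXZ hYZ heq
    rcases H with ⟨h1, h2, h3⟩ | ⟨h1, h2, h3⟩ | ⟨h1, h2, h3⟩ | ⟨h1, h2, h3⟩
    · -- (+,+,+) : Fermat with (u, s)
      have hcopus : IsCoprime u s := (aux_cop hXZ (Or.inl h1) (Or.inl h3)).symm
      exact aux_key (c := t) (e := c) hcopus (by omega) (by omega) hc
    · -- (+,-,-) : positivity
      have := sq_nonneg s; have := sq_nonneg t; omega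
    · -- (-,+,-) : positivity
      have := sq_nonneg t; have := sq_nonneg u; omega
    · -- (-,-,+) : mod 8
      obtain ⟨k1, hk1⟩ := aux_odd_of_sq haodd' (Or.inr h1)
      obtain ⟨k2, hk2⟩ := aux_odd_of_sq hYodd (Or.inr h2)
      obtain ⟨k3, hk3⟩ := aux_odd_of_sq hZodd (Or.inl h3)
      omega

lemma aux_main0 (n b d : ℤ) (hnd : IsCoprime n d) (hd : 0 < d) (hb : b ≠ 0)
    (heq : b ^ 2 = n * (n + 2 * d) * (n + 4 * d) * d) : False := by
  have h1 : IsCoprime (n + 2 * d) d := hnd.add_mul_right_left 2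
  have h2 : IsCoprime (n + 4 * d) d := hnd.add_mul_right_left 4
  have hMd : IsCoprime (n * (n + 2 * d) * (n + 4 * d)) d := (hnd.mul_left h1).mul_left h2
  obtain ⟨c, hc⟩ := Int.sq_of_isCoprime hMd.symm
    (show d * (n * (n + 2 * d) * (n + 4 * d)) = b ^ 2 by linear_combination -heq)
  rcases hc with hc | hc
  case inr => have := sq_nonneg c; omega
  have hcne : c ≠ 0 := by rintro rfl; simp at hc; omega
  subst hc
  have hcb : c ∣ b := by
    have hdvd : c ^ 2 ∣ b ^ 2 := ⟨n * (n + 2 * c ^ 2) * (n + 4 * c ^ 2), by linear_combination heq⟩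
    exact (Int.pow_dvd_pow_iff two_ne_zero).mp hdvd
  obtain ⟨b0, rfl⟩ := hcb
  have hb0 : b0 ≠ 0 := by rintro rfl; simp at hb
  have hM : n * (n + 2 * c ^ 2) * (n + 4 * c ^ 2) = b0 ^ 2 := by
    have hcc : (c : ℤ) ^ 2 ≠ 0 := pow_ne_zero 2 hcne
    apply mul_right_cancel₀ hcc
    linear_combination -heq
  have hnc : IsCoprime n c := hnd.of_isCoprime_of_dvd_right (dvd_pow_self c two_ne_zero)
  exact aux_main n b0 c hnc hcne hb0 hM

/-- The set of affine rational points of the elliptic curve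
`O₁₆ : y² = x³ + 6x² + 8x` over `ℚ` consists of exactly three points. -/
theorem stmt_7 :
    {p : ℚ × ℚ | p.2 ^ 2 = p.1 ^ 3 + 6 * p.1 ^ 2 + 8 * p.1} = {(0, 0), (-2, 0), (-4, 0)} := by
  ext ⟨x, y⟩
  simp only [Set.mem_setOf_eq, Set.mem_insert_iff, Set.mem_singleton_iff, Prod.mk.injEq]
  constructor
  · intro h
    have hy : y = 0 := by
      by_contra hy0
      set n : ℤ := x.num with hn
      set d : ℤ := (x.den : ℤ) with hd
      have hdpos : 0 < d := Int.natCast_pos.mpr x.pos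
      have hdq : (d : ℚ) ≠ 0 := by
        have : (0 : ℚ) < (d : ℚ) := by exact_mod_cast hdpos
        exact ne_of_gt this
      have hx : x = (n : ℚ) / (d : ℚ) := by
        rw [hn, hd]; push_cast; exact (Rat.num_div_den x).symm
      have hzK : (y * (d : ℚ) ^ 2) ^ 2 = ((n * (n + 2 * d) * (n + 4 * d) * d : ℤ) : ℚ) := by
        have hrw : ((n:ℚ)/d) ^ 3 + 6 * ((n:ℚ)/d) ^ 2 + 8 * ((n:ℚ)/d)
            = ((n:ℚ) * ((n:ℚ) + 2 * d) * ((n:ℚ) + 4 * d) * d) / (d:ℚ) ^ 4 := by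
          field_simp
          ring
        rw [hx, hrw] at h
        push_cast
        calc (y * (d : ℚ) ^ 2) ^ 2 = y ^ 2 * (d:ℚ) ^ 4 := by ring
          _ = (((n:ℚ) * ((n:ℚ) + 2 * d) * ((n:ℚ) + 4 * d) * d) / (d:ℚ) ^ 4) * (d:ℚ) ^ 4 := by
              rw [h]
          _ = (n:ℚ) * ((n:ℚ) + 2 * d) * ((n:ℚ) + 4 * d) * d := by
              field_simp
      set z : ℚ := y * (d : ℚ) ^ 2 with hz
      have hzden : z.den = 1 := by
        have hmul : (z * z).den = 1 := by
          rw [show z * z = ((n * (n + 2 * d) * (n + 4 * d) * d : ℤ) : ℚ) from by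
            rw [← sq]; exact hzK]
          exact Rat.den_intCast _
        have hms := Rat.mul_self_den z
        rw [hmul] at hms
        exact Nat.eq_one_of_mul_eq_one_right hms.symm
      have hzint : ((z.num : ℚ)) = z := by
        conv_rhs => rw [← Rat.num_div_den z]
        rw [hzden]; simp
      have hbK : z.num ^ 2 = n * (n + 2 * d) * (n + 4 * d) * d := by
        have hq : ((z.num : ℚ)) ^ 2 = ((n * (n + 2 * d) * (n + 4 * d) * d : ℤ) : ℚ) := by
          rw [hzint]; exact hzK
        exact_mod_cast hq
      have hzne : z.num ≠ 0 := by
        intro h0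
        apply hy0
        have hz0 : z = 0 := by rw [← hzint, h0]; simp
        rcases mul_eq_zero.mp (hz.symm.trans hz0) with h' | h'
        · exact h'
        · exact absurd h' (pow_ne_zero 2 hdq)
      have hcop : IsCoprime n d := by
        rw [Int.isCoprime_iff_gcd_eq_one]
        have hred := x.reduced
        simpa [Int.gcd, hn, hd] using hred
      exact aux_main0 n z.num d hcop hdpos hzne hbK
    subst hy
    have h0 : x * (x + 2) * (x + 4) = 0 := by linear_combination -h
    have hx3 : x = 0 ∨ x = -2 ∨ x = -4 := by
      rcases mul_eq_zero.mp h0 with h1 | h1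
      · rcases mul_eq_zero.mp h1 with h2 | h2
        · exact Or.inl h2
        · exact Or.inr (Or.inl (by linarith))
      · exact Or.inr (Or.inr (by linarith))
    rcases hx3 with h' | h' | h'
    · exact Or.inl ⟨h', rfl⟩
    · exact Or.inr (Or.inl ⟨h', rfl⟩)
    · exact Or.inr (Or.inr ⟨h', rfl⟩)
  · rintro (⟨rfl, rfl⟩ | ⟨rfl, rfl⟩ | ⟨rfl, rfl⟩) <;> norm_num
end

section
/- Let K be a field with char(K) ≠ 2 and let t ∈ K satisfy t(t^2 − 1)(t^2 + 1) ≠ 0. Then the polynomial (2x^2 − t)·(4t^2·x^4 + 4(t^2 + t + 1)·x^2 + 1) ∈ K[x] is a separable (squarefree) polynomial of degree 6. -/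
open Polynomial

set_option maxHeartbeats 1600000

/-- For `char K ≠ 2` and `t(t² − 1)(t² + 1) ≠ 0`, the sextic
`(2x² − t)(4t²x⁴ + 4(t² + t + 1)x² + 1)` defining the curve `Cₜ` of Howe's
family is squarefree of degree `6`. -/
theorem stmt_11 {K : Type*} [Field K] (hchar : ringChar K ≠ 2) (t : K)
    (ht : t * (t ^ 2 - 1) * (t ^ 2 + 1) ≠ 0) :
    Squarefree ((2 * X ^ 2 - C t) *
        (C (4 * t ^ 2) * X ^ 4 + C (4 * (t ^ 2 + t + 1)) * X ^ 2 + 1) : K[X]) ∧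
      ((2 * X ^ 2 - C t) *
        (C (4 * t ^ 2) * X ^ 4 + C (4 * (t ^ 2 + t + 1)) * X ^ 2 + 1) : K[X]).natDegree = 6 := by
  have h2 : (2 : K) ≠ 0 := Ring.two_ne_zero hchar
  have ht0 : t ≠ 0 := fun h => ht (by rw [h]; ring)
  have ht1 : t + 1 ≠ 0 := by
    intro h
    apply ht
    have : t = -1 := by linear_combination h
    rw [this]; ring
  have hti : t ^ 2 + 1 ≠ 0 := fun h => ht (by rw [h]; ring)
  set p : K[X] := (2 * X ^ 2 - C t) *
      (C (4 * t ^ 2) * X ^ 4 + C (4 * (t ^ 2 + t + 1)) * X ^ 2 + 1) with hp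
  -- the Bézout datum
  set d : K := 4 * t * (t + 1) ^ 4 * (t ^ 2 + 1) ^ 2 with hd
  have hdne : d ≠ 0 := by
    rw [hd]
    have h4 : (4 : K) ≠ 0 := by
      have : (4 : K) = 2 * 2 := by norm_num
      rw [this]; exact mul_ne_zero h2 h2
    exact mul_ne_zero (mul_ne_zero (mul_ne_zero h4 ht0) (pow_ne_zero _ ht1))
      (pow_ne_zero _ hti)
  set A : K[X] :=
    C (-4 - 16*t - 32*t^2 - 48*t^3 - 56*t^4 - 48*t^5 - 32*t^6 - 16*t^7 - 4*t^8)
      + C (-32 + 32*t + 96*t^2 + 176*t^3 + 160*t^4 + 100*t^5 + 24*t^6 - 8*t^7 - 8*t^8) * X^2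
      + C (-48*t^2 + 96*t^3 + 96*t^4 + 120*t^5 + 72*t^6 + 24*t^7) * X^4 with hA
  set B : K[X] :=
    C (2 + 8*t^2 + 16*t^3 + 24*t^4 + 24*t^5 + 17*t^6 + 8*t^7 + 2*t^8) * X
      + C (8 - 8*t - 24*t^2 - 48*t^3 - 40*t^4 - 26*t^5 - 6*t^6 + 2*t^7 + 2*t^8) * X^3
      + C (8*t^2 - 16*t^3 - 16*t^4 - 20*t^5 - 12*t^6 - 4*t^7) * X^5 with hB
  have hder : derivative p =
      4 * X * (C (4 * t ^ 2) * X ^ 4 + C (4 * (t ^ 2 + t + 1)) * X ^ 2 + 1) +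
        (2 * X ^ 2 - C t) * (C (16 * t ^ 2) * X ^ 3 + C (8 * (t ^ 2 + t + 1)) * X) := by
    rw [hp]
    simp only [derivative_mul, derivative_sub, derivative_add, derivative_one,
      derivative_C, derivative_X_pow, derivative_ofNat, derivative_X, map_natCast]
    simp only [map_mul, map_add, map_sub, map_pow, map_ofNat, map_one, map_natCast]
    push_cast
    ring
  have hbez : A * p + B * derivative p = C d := by
    rw [hder, hp, hA, hB, hd]
    simp only [map_mul, map_add, map_sub, map_neg, map_pow, map_ofNat, map_one, map_natCast]
    push_cast
    ring
  have hsep : p.Separable := by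
    refine ⟨C d⁻¹ * A, C d⁻¹ * B, ?_⟩
    calc C d⁻¹ * A * p + C d⁻¹ * B * derivative p
        = C d⁻¹ * (A * p + B * derivative p) := by ring
      _ = 1 := by rw [hbez, ← C_mul, inv_mul_cancel₀ hdne, C_1]
  refine ⟨hsep.squarefree, ?_⟩
  rw [hp]
  have h1 : (2 * X ^ 2 - C t : K[X]).natDegree = 2 := by
    compute_degree!
  have h2' : (C (4 * t ^ 2) * X ^ 4 + C (4 * (t ^ 2 + t + 1)) * X ^ 2 + 1 : K[X]).natDegree
      = 4 := by
    compute_degree!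
    refine ⟨fun h4 => ?_, ht0⟩
    have h22 : (2:K) * 2 = 0 := by rw [show (2:K)*2 = 4 by norm_num, h4]
    rcases mul_eq_zero.mp h22 with h | h <;> exact h2 h
  rw [natDegree_mul, h1, h2']
  · intro h
    have := congrArg (fun q => q.coeff 2) h
    simp at this
    exact h2 this
  · intro h
    have := congrArg (fun q => q.coeff 0) h
    simp at this
end

section
/- Let K be a field with char(K) ≠ 2 and let t ∈ K satisfy t(t^2 + 27)(t^2 + 243)(t^2 + 3)(t^4 − 10t^2 + 729) ≠ 0. Then the polynomial 16t^3·x^6 + (t^4 + 16t^3 − 126t^2 + 648t − 2187)·x^4 + (t^4 − 8t^3 + 42t^2 − 144t − 243)·x^2 − 16t ∈ K[x] is a separable (squarefree) polynomial of degree 6. -/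
/-!
The sextic is `g(x²)` for a cubic `g` whose discriminant is `(t² + 27)² (t² − 8t + 27)⁶`, and
`t⁴ − 10t² + 729 = (t² − 8t + 27)(t² + 8t + 27)`, so `g` is separable. Since
`(g(x²))' = 2x · g'(x²)`, separability survives the substitution `x ↦ x²` as soon as `2 ≠ 0`
and `g(0) = −16t ≠ 0`.
-/

open Polynomial

namespace Polynomial

theorem discr_cubic {R : Type*} [CommRing R] {a b c d : R} (ha : a ≠ 0) :
    (C a * X ^ 3 + C b * X ^ 2 + C c * X + C d).discr =
      b ^ 2 * c ^ 2 - 4 * a * c ^ 3 - 4 * b ^ 3 * d - 27 * a ^ 2 * d ^ 2 + 18 * a * b * c * d := by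
  rw [discr_of_degree_eq_three (degree_cubic ha)]
  simp [coeff_X, coeff_C, coeff_X_pow]

variable {K : Type*} [Field K]

theorem separable_of_discr_ne_zero {f : K[X]} (hf : 0 < f.degree) (h : f.discr ≠ 0) :
    f.Separable := by
  have hr : f.resultant (derivative f) f.natDegree (f.natDegree - 1) ≠ 0 := by
    rw [resultant_deriv hf]
    exact mul_ne_zero (mul_ne_zero (pow_ne_zero _ (neg_ne_zero.mpr one_ne_zero))
      (leadingCoeff_ne_zero.mpr (ne_zero_of_degree_gt hf))) h
  obtain ⟨p, q, -, -, hpq⟩ := exists_mul_add_mul_eq_C_resultant f (derivative f) le_rfl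
    (natDegree_derivative_le f) (Or.inl (natDegree_pos_iff_degree_pos.mpr hf).ne')
  set r := f.resultant (derivative f) f.natDegree (f.natDegree - 1)
  have hCr : C r⁻¹ * C r = 1 := by rw [← C_mul, inv_mul_cancel₀ hr, C_1]
  exact ⟨C r⁻¹ * p, C r⁻¹ * q, by linear_combination C r⁻¹ * hpq + hCr⟩

theorem Separable.expand_of_coeff_zero_ne_zero {f : K[X]} {n : ℕ} (hf : f.Separable)
    (hn : (n : K) ≠ 0) (h0 : f.coeff 0 ≠ 0) : (expand K n f).Separable := by
  have hn0 : 0 < n := Nat.pos_of_ne_zero (by rintro rfl; exact hn Nat.cast_zero)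
  have hX : IsCoprime (expand K n f) X := by
    refine ((irreducible_X.coprime_iff_not_dvd).mpr ?_).symm
    rwa [X_dvd_iff, coeff_expand hn0, if_pos (dvd_zero n), Nat.zero_div]
  have hunit : IsUnit (n : K[X]) := by
    rw [← C_eq_natCast]; exact isUnit_C.mpr hn.isUnit
  rw [Separable, derivative_expand]
  exact (IsCoprime.map hf (expand K n : K[X] →+* K[X])).mul_right
    ((isCoprime_mul_unit_left_right hunit _ _).mpr hX.pow_right)


end Polynomial

section CurveCubic

variable {K : Type*} [Field K]

noncomputable def curveCubic (t : K) : K[X] :=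
  C (16 * t ^ 3) * X ^ 3 + C (t ^ 4 + 16 * t ^ 3 - 126 * t ^ 2 + 648 * t - 2187) * X ^ 2 +
    C (t ^ 4 - 8 * t ^ 3 + 42 * t ^ 2 - 144 * t - 243) * X + C (-(16 * t))

theorem expand_curveCubic (t : K) :
    expand K 2 (curveCubic t) = C (16 * t ^ 3) * X ^ 6 +
        C (t ^ 4 + 16 * t ^ 3 - 126 * t ^ 2 + 648 * t - 2187) * X ^ 4 +
        C (t ^ 4 - 8 * t ^ 3 + 42 * t ^ 2 - 144 * t - 243) * X ^ 2 - C (16 * t) := by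
  simp only [curveCubic, map_add, map_mul, map_pow, map_neg, expand_C, expand_X]
  ring

theorem natDegree_curveCubic {t : K} (h : 16 * t ^ 3 ≠ 0) : (curveCubic t).natDegree = 3 :=
  natDegree_cubic h

theorem coeff_zero_curveCubic (t : K) : (curveCubic t).coeff 0 = -(16 * t) := by
  simp [curveCubic, coeff_X, coeff_C, coeff_X_pow]

theorem discr_curveCubic {t : K} (h : 16 * t ^ 3 ≠ 0) :
    (curveCubic t).discr = (t ^ 2 + 27) ^ 2 * (t ^ 2 - 8 * t + 27) ^ 6 := by
  rw [curveCubic, discr_cubic h]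
  ring

end CurveCubic

/-- For `char K ≠ 2` and `t(t² + 27)(t² + 243)(t² + 3)(t⁴ − 10t² + 729) ≠ 0`,
the sextic defining the curve `Cₜ` of Theorem 1 is squarefree of degree `6`. -/
theorem stmt_12 {K : Type*} [Field K] (hchar : ringChar K ≠ 2) (t : K)
    (ht : t * (t ^ 2 + 27) * (t ^ 2 + 243) * (t ^ 2 + 3) * (t ^ 4 - 10 * t ^ 2 + 729) ≠ 0) :
    Squarefree (C (16 * t ^ 3) * X ^ 6 +
        C (t ^ 4 + 16 * t ^ 3 - 126 * t ^ 2 + 648 * t - 2187) * X ^ 4 +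
        C (t ^ 4 - 8 * t ^ 3 + 42 * t ^ 2 - 144 * t - 243) * X ^ 2 - C (16 * t) : K[X]) ∧
      (C (16 * t ^ 3) * X ^ 6 +
        C (t ^ 4 + 16 * t ^ 3 - 126 * t ^ 2 + 648 * t - 2187) * X ^ 4 +
        C (t ^ 4 - 8 * t ^ 3 + 42 * t ^ 2 - 144 * t - 243) * X ^ 2 -
          C (16 * t) : K[X]).natDegree = 6 := by
  have h2 : (2 : K) ≠ 0 := Ring.two_ne_zero hchar
  simp only [mul_ne_zero_iff] at ht
  obtain ⟨⟨⟨⟨ht0, h27⟩, -⟩, -⟩, h729⟩ := ht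
  have hq : t ^ 2 - 8 * t + 27 ≠ 0 := fun h =>
    h729 (by linear_combination (t ^ 2 + 8 * t + 27) * h)
  have hlead : 16 * t ^ 3 ≠ 0 :=
    mul_ne_zero (by simpa [show (2 : K) ^ 4 = 16 by norm_num] using pow_ne_zero 4 h2)
      (pow_ne_zero 3 ht0)
  have hsep : (curveCubic t).Separable := by
    refine separable_of_discr_ne_zero ?_ ?_
    · rw [← natDegree_pos_iff_degree_pos, natDegree_curveCubic hlead]
      norm_num
    · rw [discr_curveCubic hlead]
      exact mul_ne_zero (pow_ne_zero 2 h27) (pow_ne_zero 6 hq)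
  have hcoeff : (curveCubic t).coeff 0 ≠ 0 := by
    rw [coeff_zero_curveCubic]
    exact neg_ne_zero.mpr (mul_ne_zero (left_ne_zero_of_mul hlead) ht0)
  rw [← expand_curveCubic]
  exact ⟨(hsep.expand_of_coeff_zero_ne_zero (by exact_mod_cast h2) hcoeff).squarefree,
    by rw [natDegree_expand, natDegree_curveCubic hlead]⟩
end

section
/- Let K be a field with char(K) ≠ 2 and let t ∈ K satisfy t(t^2 + 1)(2t^2 + 1)(t^2 + 2)(t^2 − 1)(t^4 + t^2 + 1) ≠ 0. Then the polynomial (4x^2 + t)·(16t^4·x^4 + 8(2t^4 − 4t^3 + 5t^2 − 4t + 2)·x^2 + 1) ∈ K[x] is a separable (squarefree) polynomial of degree 6. -/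
open Polynomial

private lemma bez_coprime {K : Type*} [Field K] {p q u v : K[X]} {r : K} (hr : r ≠ 0)
    (h : u * p + v * q = C r) : IsCoprime p q := by
  refine ⟨C r⁻¹ * u, C r⁻¹ * v, ?_⟩
  have : C r⁻¹ * u * p + C r⁻¹ * v * q = C r⁻¹ * (u * p + v * q) := by ring
  rw [this, h, ← C_mul, inv_mul_cancel₀ hr, C_1]

/-- For `char K ≠ 2` and `t(t² + 1)(2t² + 1)(t² + 2)(t² − 1)(t⁴ + t² + 1) ≠ 0`,
the sextic defining the curve `Cₜ` of Theorem 2 is squarefree of degree `6`. -/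
theorem stmt_13 {K : Type*} [Field K] (hchar : ringChar K ≠ 2) (t : K)
    (ht : t * (t ^ 2 + 1) * (2 * t ^ 2 + 1) * (t ^ 2 + 2) * (t ^ 2 - 1) *
      (t ^ 4 + t ^ 2 + 1) ≠ 0) :
    Squarefree ((4 * X ^ 2 + C t) *
        (C (16 * t ^ 4) * X ^ 4 +
          C (8 * (2 * t ^ 4 - 4 * t ^ 3 + 5 * t ^ 2 - 4 * t + 2)) * X ^ 2 + 1) : K[X]) ∧
      ((4 * X ^ 2 + C t) *
        (C (16 * t ^ 4) * X ^ 4 +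
          C (8 * (2 * t ^ 4 - 4 * t ^ 3 + 5 * t ^ 2 - 4 * t + 2)) * X ^ 2 + 1) : K[X]).natDegree
        = 6 := by
  have h2 : (2 : K) ≠ 0 := Ring.two_ne_zero hchar
  -- extract nonvanishing facts
  have ht' := ht
  rw [mul_ne_zero_iff, mul_ne_zero_iff, mul_ne_zero_iff, mul_ne_zero_iff,
    mul_ne_zero_iff] at ht'
  obtain ⟨⟨⟨⟨⟨ht0, h1⟩, _⟩, _⟩, h4⟩, h5⟩ := ht'
  have htm1 : t - 1 ≠ 0 := by
    intro h
    apply h4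
    have : t ^ 2 - 1 = (t - 1) * (t + 1) := by ring
    rw [this, h, zero_mul]
  have hq1 : t ^ 2 - t + 1 ≠ 0 := by
    intro h
    apply h5
    have : t ^ 4 + t ^ 2 + 1 = (t ^ 2 - t + 1) * (t ^ 2 + t + 1) := by ring
    rw [this, h, zero_mul]
  set b : K := 2 * t ^ 4 - 4 * t ^ 3 + 5 * t ^ 2 - 4 * t + 2 with hb
  set p : K[X] := 4 * X ^ 2 + C t with hp
  set q : K[X] := C (16 * t ^ 4) * X ^ 4 + C (8 * b) * X ^ 2 + 1 with hq
  have hdp : derivative p = C 8 * X := by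
    rw [hp]
    simp only [derivative_add, derivative_mul, derivative_C, derivative_X_pow, derivative_ofNat]
    push_cast
    rw [map_ofNat C 8]
    ring_nf
    rw [show (4:K[X]) = C 4 from (map_ofNat C 4).symm,
      show (8:K[X]) = C 8 from (map_ofNat C 8).symm, mul_assoc, ← C_mul]
    norm_num
  have hdq : derivative q = C (64 * t ^ 4) * X ^ 3 + C (16 * b) * X := by
    rw [hq]
    simp only [derivative_add, derivative_mul, derivative_C, derivative_X_pow, derivative_one]
    push_cast
    simp only [map_mul, map_ofNat]
    ring
  -- p is separable: 2p - X p' = C (2t)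
  have hsep_p : p.Separable := by
    refine bez_coprime (u := 2) (v := -X) (r := 2 * t) (mul_ne_zero h2 ht0) ?_
    rw [hdp, hp]
    simp only [map_mul, map_ofNat]
    ring
  -- q is separable
  have hR1 : (-512 : K) * (t ^ 2 + 1) * (t - 1) ^ 2 * (t ^ 2 - t + 1) ^ 2 ≠ 0 := by
    have h512 : (-512 : K) ≠ 0 := by
      have : (-512 : K) = -(2 ^ 9) := by norm_num
      rw [this]
      exact neg_ne_zero.mpr (pow_ne_zero _ h2)
    exact mul_ne_zero (mul_ne_zero (mul_ne_zero h512 h1) (pow_ne_zero _ htm1))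
      (pow_ne_zero _ hq1)
  have hsep_q : q.Separable := by
    refine bez_coprime
      (u := C (8 * (16 * t ^ 4) - 2 * (8 * b) ^ 2) + C (-(4 * (16 * t ^ 4) * (8 * b))) * X ^ 2)
      (v := C ((8 * b) ^ 2 - 2 * (16 * t ^ 4)) * X + C ((16 * t ^ 4) * (8 * b)) * X ^ 3)
      (r := -512 * (t ^ 2 + 1) * (t - 1) ^ 2 * (t ^ 2 - t + 1) ^ 2) hR1 ?_
    rw [hdq, hq, hb]
    simp only [map_mul, map_add, map_sub, map_pow, map_neg, map_ofNat, map_one]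
    ring
  -- p and q are coprime
  have hR2 : (16 : K) * (t - 1) ^ 2 * (t ^ 2 - t + 1) ^ 2 ≠ 0 := by
    have h16 : (16 : K) ≠ 0 := by
      have : (16 : K) = 2 ^ 4 := by norm_num
      rw [this]; exact pow_ne_zero _ h2
    exact mul_ne_zero (mul_ne_zero h16 (pow_ne_zero _ htm1)) (pow_ne_zero _ hq1)
  have hcop : IsCoprime p q := by
    apply IsCoprime.symm
    refine bez_coprime (u := (16 : K[X]))
      (v := -(C (4 * (16 * t ^ 4)) * X ^ 2 + C (4 * (8 * b) - 16 * t ^ 4 * t)))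
      (r := 16 * (t - 1) ^ 2 * (t ^ 2 - t + 1) ^ 2) hR2 ?_
    rw [hq, hp, hb]
    simp only [map_mul, map_add, map_sub, map_pow, map_neg, map_ofNat, map_one]
    ring
  have hsep : (p * q).Separable := hsep_p.mul hsep_q hcop
  constructor
  · exact hsep.squarefree
  · have h4K : (4 : K) ≠ 0 := by
      have : (4 : K) = 2 ^ 2 := by norm_num
      rw [this]; exact pow_ne_zero _ h2
    have h16t : (16 : K) * t ^ 4 ≠ 0 := by
      have h16 : (16 : K) ≠ 0 := by
        have : (16 : K) = 2 ^ 4 := by norm_num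
        rw [this]; exact pow_ne_zero _ h2
      exact mul_ne_zero h16 (pow_ne_zero _ ht0)
    have h16K : (16 : K) ≠ 0 := by
      have : (16 : K) = 2 ^ 4 := by norm_num
      rw [this]; exact pow_ne_zero _ h2
    have hpd : p.natDegree = 2 := by
      rw [hp]; compute_degree!
    have hqd : q.natDegree = 4 := by
      rw [hq]; compute_degree!
    have hp0 : p ≠ 0 := by
      intro h; rw [h] at hpd; simp at hpd
    have hq0 : q ≠ 0 := by
      intro h; rw [h] at hqd; simp at hqd
    rw [natDegree_mul hp0 hq0, hpd, hqd]
end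

section
/- Let K be a field with char(K) ≠ 2 and let t ∈ K satisfy t(t^4 + 13t^2 + 49)(t^8 − 6t^6 + 43t^4 − 294t^2 + 2401)(t^4 + 5t^2 + 1)(t^2 + 7)(t^4 + 245t^2 + 2401) ≠ 0. Then the polynomial 16t^7·x^6 + (t^8 + 16t^7 − 130t^6 + 640t^5 − 2289t^4 + 6272t^3 − 13034t^2 + 19208t − 16807)·x^4 + (t^8 − 8t^7 + 38t^6 − 128t^5 + 327t^4 − 640t^3 + 910t^2 − 784t − 343)·x^2 − 16t ∈ K[x] is a separable (squarefree) polynomial of degree 6. -/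
open Polynomial

set_option maxHeartbeats 2000000 in
/-- For `char K ≠ 2` and
`t(t⁴ + 13t² + 49)(t⁸ − 6t⁶ + 43t⁴ − 294t² + 2401)(t⁴ + 5t² + 1)(t² + 7)(t⁴ + 245t² + 2401) ≠ 0`,
the sextic defining the curve `Cₜ` of Theorem 3 is squarefree of degree `6`. -/
theorem stmt_14 {K : Type*} [Field K] (hchar : ringChar K ≠ 2) (t : K)
    (ht : t * (t ^ 4 + 13 * t ^ 2 + 49) *
      (t ^ 8 - 6 * t ^ 6 + 43 * t ^ 4 - 294 * t ^ 2 + 2401) *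
      (t ^ 4 + 5 * t ^ 2 + 1) * (t ^ 2 + 7) * (t ^ 4 + 245 * t ^ 2 + 2401) ≠ 0) :
    Squarefree (C (16 * t ^ 7) * X ^ 6 +
        C (t ^ 8 + 16 * t ^ 7 - 130 * t ^ 6 + 640 * t ^ 5 - 2289 * t ^ 4 + 6272 * t ^ 3 -
          13034 * t ^ 2 + 19208 * t - 16807) * X ^ 4 +
        C (t ^ 8 - 8 * t ^ 7 + 38 * t ^ 6 - 128 * t ^ 5 + 327 * t ^ 4 - 640 * t ^ 3 +
          910 * t ^ 2 - 784 * t - 343) * X ^ 2 - C (16 * t) : K[X]) ∧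
      (C (16 * t ^ 7) * X ^ 6 +
        C (t ^ 8 + 16 * t ^ 7 - 130 * t ^ 6 + 640 * t ^ 5 - 2289 * t ^ 4 + 6272 * t ^ 3 -
          13034 * t ^ 2 + 19208 * t - 16807) * X ^ 4 +
        C (t ^ 8 - 8 * t ^ 7 + 38 * t ^ 6 - 128 * t ^ 5 + 327 * t ^ 4 - 640 * t ^ 3 +
          910 * t ^ 2 - 784 * t - 343) * X ^ 2 - C (16 * t) : K[X]).natDegree = 6 := by
  obtain ⟨⟨⟨⟨⟨h1, h2⟩, h3⟩, h4⟩, h5⟩, h6⟩ := by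
    simpa only [mul_ne_zero_iff] using ht
  have h2K : (2 : K) ≠ 0 := Ring.two_ne_zero hchar
  have h16 : (16 : K) ≠ 0 := by
    have : (16 : K) = 2 ^ 4 := by norm_num
    rw [this]; exact pow_ne_zero _ h2K
  have h16t : 16 * t ≠ 0 := mul_ne_zero h16 h1
  have h16t7 : 16 * t ^ 7 ≠ 0 := mul_ne_zero h16 (pow_ne_zero _ h1)
  have h5m : t ^ 2 - 5 * t + 7 ≠ 0 := fun h =>
    h3 (by linear_combination ((t ^ 2 + 5 * t + 7) * (t ^ 2 - 3 * t + 7) * (t ^ 2 + 3 * t + 7)) * h)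
  have h3m : t ^ 2 - 3 * t + 7 ≠ 0 := fun h =>
    h3 (by linear_combination ((t ^ 2 + 5 * t + 7) * (t ^ 2 - 5 * t + 7) * (t ^ 2 + 3 * t + 7)) * h)
  have hDn : (t ^ 2 - 5 * t + 7) ^ 4 * (t ^ 2 - 3 * t + 7) ^ 4 * (t ^ 4 + 13 * t ^ 2 + 49) ≠ 0 :=
    mul_ne_zero (mul_ne_zero (pow_ne_zero _ h5m) (pow_ne_zero _ h3m)) h2
  -- the cubic and its "derivative"
  -- key Bezout identity
  have key :
      (C (-96 * t ^ 11 - 23520 * t ^ 9 - 230496 * t ^ 7) * X +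
        C (-4 * t ^ 12 - 16 * t ^ 11 + 692 * t ^ 10 - 16848 * t ^ 9 + 135016 * t ^ 8 -
          803600 * t ^ 7 + 3543876 * t ^ 6 - 12369952 * t ^ 5 + 34824104 * t ^ 4 -
          79060128 * t ^ 3 + 141649396 * t ^ 2 - 184473632 * t + 161414428)) *
      (C (16 * t ^ 7) * X ^ 3 +
        C (t ^ 8 + 16 * t ^ 7 - 130 * t ^ 6 + 640 * t ^ 5 - 2289 * t ^ 4 + 6272 * t ^ 3 -
          13034 * t ^ 2 + 19208 * t - 16807) * X ^ 2 +
        C (t ^ 8 - 8 * t ^ 7 + 38 * t ^ 6 - 128 * t ^ 5 + 327 * t ^ 4 - 640 * t ^ 3 +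
          910 * t ^ 2 - 784 * t - 343) * X - C (16 * t)) +
      (C (32 * t ^ 11 + 7840 * t ^ 9 + 76832 * t ^ 7) * X ^ 2 +
        C (2 * t ^ 12 + 16 * t ^ 11 - 154 * t ^ 10 + 8656 * t ^ 9 - 66164 * t ^ 8 +
          402192 * t ^ 7 - 1771938 * t ^ 6 + 6184976 * t ^ 5 - 17412052 * t ^ 4 +
          39530064 * t ^ 3 - 70824698 * t ^ 2 + 92236816 * t - 80707214) * X +
        C (t ^ 12 - 24 * t ^ 11 + 283 * t ^ 10 - 2168 * t ^ 9 + 12038 * t ^ 8 - 51224 * t ^ 7 +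
          172263 * t ^ 6 - 464912 * t ^ 5 + 1007734 * t ^ 4 - 1728720 * t ^ 3 +
          2100875 * t ^ 2 - 1882384 * t - 823543)) *
      (C (3 * (16 * t ^ 7)) * X ^ 2 +
        C (2 * (t ^ 8 + 16 * t ^ 7 - 130 * t ^ 6 + 640 * t ^ 5 - 2289 * t ^ 4 + 6272 * t ^ 3 -
          13034 * t ^ 2 + 19208 * t - 16807)) * X +
        C (t ^ 8 - 8 * t ^ 7 + 38 * t ^ 6 - 128 * t ^ 5 + 327 * t ^ 4 - 640 * t ^ 3 +
          910 * t ^ 2 - 784 * t - 343)) =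
      C ((t ^ 2 - 5 * t + 7) ^ 4 * (t ^ 2 - 3 * t + 7) ^ 4 * (t ^ 4 + 13 * t ^ 2 + 49) : K) := by
    simp only [C_add, C_sub, C_mul, C_pow, C_neg, map_ofNat]
    ring
  -- coprimality of the cubic and its derivative
  have hcopG : IsCoprime
      (C (16 * t ^ 7) * X ^ 3 +
        C (t ^ 8 + 16 * t ^ 7 - 130 * t ^ 6 + 640 * t ^ 5 - 2289 * t ^ 4 + 6272 * t ^ 3 -
          13034 * t ^ 2 + 19208 * t - 16807) * X ^ 2 +
        C (t ^ 8 - 8 * t ^ 7 + 38 * t ^ 6 - 128 * t ^ 5 + 327 * t ^ 4 - 640 * t ^ 3 +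
          910 * t ^ 2 - 784 * t - 343) * X - C (16 * t) : K[X])
      (C (3 * (16 * t ^ 7)) * X ^ 2 +
        C (2 * (t ^ 8 + 16 * t ^ 7 - 130 * t ^ 6 + 640 * t ^ 5 - 2289 * t ^ 4 + 6272 * t ^ 3 -
          13034 * t ^ 2 + 19208 * t - 16807)) * X +
        C (t ^ 8 - 8 * t ^ 7 + 38 * t ^ 6 - 128 * t ^ 5 + 327 * t ^ 4 - 640 * t ^ 3 +
          910 * t ^ 2 - 784 * t - 343) : K[X]) := by
    refine ⟨C (((t ^ 2 - 5 * t + 7) ^ 4 * (t ^ 2 - 3 * t + 7) ^ 4 *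
        (t ^ 4 + 13 * t ^ 2 + 49))⁻¹) *
      (C (-96 * t ^ 11 - 23520 * t ^ 9 - 230496 * t ^ 7) * X +
        C (-4 * t ^ 12 - 16 * t ^ 11 + 692 * t ^ 10 - 16848 * t ^ 9 + 135016 * t ^ 8 -
          803600 * t ^ 7 + 3543876 * t ^ 6 - 12369952 * t ^ 5 + 34824104 * t ^ 4 -
          79060128 * t ^ 3 + 141649396 * t ^ 2 - 184473632 * t + 161414428)),
      C (((t ^ 2 - 5 * t + 7) ^ 4 * (t ^ 2 - 3 * t + 7) ^ 4 *
        (t ^ 4 + 13 * t ^ 2 + 49))⁻¹) *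
      (C (32 * t ^ 11 + 7840 * t ^ 9 + 76832 * t ^ 7) * X ^ 2 +
        C (2 * t ^ 12 + 16 * t ^ 11 - 154 * t ^ 10 + 8656 * t ^ 9 - 66164 * t ^ 8 +
          402192 * t ^ 7 - 1771938 * t ^ 6 + 6184976 * t ^ 5 - 17412052 * t ^ 4 +
          39530064 * t ^ 3 - 70824698 * t ^ 2 + 92236816 * t - 80707214) * X +
        C (t ^ 12 - 24 * t ^ 11 + 283 * t ^ 10 - 2168 * t ^ 9 + 12038 * t ^ 8 - 51224 * t ^ 7 +
          172263 * t ^ 6 - 464912 * t ^ 5 + 1007734 * t ^ 4 - 1728720 * t ^ 3 +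
          2100875 * t ^ 2 - 1882384 * t - 823543)), ?_⟩
    have : C (((t ^ 2 - 5 * t + 7) ^ 4 * (t ^ 2 - 3 * t + 7) ^ 4 *
        (t ^ 4 + 13 * t ^ 2 + 49))⁻¹) *
        C ((t ^ 2 - 5 * t + 7) ^ 4 * (t ^ 2 - 3 * t + 7) ^ 4 * (t ^ 4 + 13 * t ^ 2 + 49) : K) =
        1 := by
      rw [← C_mul, inv_mul_cancel₀ hDn, C_1]
    rw [← this, ← key]
    ring
  refine ⟨?_, ?_⟩
  · apply Polynomial.Separable.squarefree
    rw [separable_def]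
    have hFcomp : (C (16 * t ^ 7) * X ^ 6 +
        C (t ^ 8 + 16 * t ^ 7 - 130 * t ^ 6 + 640 * t ^ 5 - 2289 * t ^ 4 + 6272 * t ^ 3 -
          13034 * t ^ 2 + 19208 * t - 16807) * X ^ 4 +
        C (t ^ 8 - 8 * t ^ 7 + 38 * t ^ 6 - 128 * t ^ 5 + 327 * t ^ 4 - 640 * t ^ 3 +
          910 * t ^ 2 - 784 * t - 343) * X ^ 2 - C (16 * t) : K[X]) = (C (16 * t ^ 7) * X ^ 3 +
        C (t ^ 8 + 16 * t ^ 7 - 130 * t ^ 6 + 640 * t ^ 5 - 2289 * t ^ 4 + 6272 * t ^ 3 -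
          13034 * t ^ 2 + 19208 * t - 16807) * X ^ 2 +
        C (t ^ 8 - 8 * t ^ 7 + 38 * t ^ 6 - 128 * t ^ 5 + 327 * t ^ 4 - 640 * t ^ 3 +
          910 * t ^ 2 - 784 * t - 343) * X - C (16 * t) : K[X]).comp (X ^ 2) := by
      simp only [add_comp, sub_comp, mul_comp, pow_comp, C_comp, X_comp]
      ring
    have hcopFX : IsCoprime (C (16 * t ^ 7) * X ^ 6 +
        C (t ^ 8 + 16 * t ^ 7 - 130 * t ^ 6 + 640 * t ^ 5 - 2289 * t ^ 4 + 6272 * t ^ 3 -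
          13034 * t ^ 2 + 19208 * t - 16807) * X ^ 4 +
        C (t ^ 8 - 8 * t ^ 7 + 38 * t ^ 6 - 128 * t ^ 5 + 327 * t ^ 4 - 640 * t ^ 3 +
          910 * t ^ 2 - 784 * t - 343) * X ^ 2 - C (16 * t) : K[X]) (X : K[X]) := by
      refine ⟨-C ((16 * t)⁻¹), C ((16 * t)⁻¹) *
        (X * (C (16 * t ^ 7) * X ^ 4 + C (t ^ 8 + 16 * t ^ 7 - 130 * t ^ 6 + 640 * t ^ 5 - 2289 * t ^ 4 + 6272 * t ^ 3 -
          13034 * t ^ 2 + 19208 * t - 16807) * X ^ 2 + C (t ^ 8 - 8 * t ^ 7 + 38 * t ^ 6 - 128 * t ^ 5 + 327 * t ^ 4 - 640 * t ^ 3 +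
          910 * t ^ 2 - 784 * t - 343))), ?_⟩
      have h : -C ((16 * t)⁻¹) * (C (16 * t ^ 7) * X ^ 6 +
        C (t ^ 8 + 16 * t ^ 7 - 130 * t ^ 6 + 640 * t ^ 5 - 2289 * t ^ 4 + 6272 * t ^ 3 -
          13034 * t ^ 2 + 19208 * t - 16807) * X ^ 4 +
        C (t ^ 8 - 8 * t ^ 7 + 38 * t ^ 6 - 128 * t ^ 5 + 327 * t ^ 4 - 640 * t ^ 3 +
          910 * t ^ 2 - 784 * t - 343) * X ^ 2 - C (16 * t) : K[X]) +
          C ((16 * t)⁻¹) * (X * (C (16 * t ^ 7) * X ^ 4 + C (t ^ 8 + 16 * t ^ 7 - 130 * t ^ 6 + 640 * t ^ 5 - 2289 * t ^ 4 + 6272 * t ^ 3 -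
          13034 * t ^ 2 + 19208 * t - 16807) * X ^ 2 + C (t ^ 8 - 8 * t ^ 7 + 38 * t ^ 6 - 128 * t ^ 5 + 327 * t ^ 4 - 640 * t ^ 3 +
          910 * t ^ 2 - 784 * t - 343))) * X =
          C ((16 * t)⁻¹) * C (16 * t) := by ring
      rw [h, ← C_mul, inv_mul_cancel₀ h16t, C_1]
    have hcopF2 : IsCoprime (C (16 * t ^ 7) * X ^ 6 +
        C (t ^ 8 + 16 * t ^ 7 - 130 * t ^ 6 + 640 * t ^ 5 - 2289 * t ^ 4 + 6272 * t ^ 3 -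
          13034 * t ^ 2 + 19208 * t - 16807) * X ^ 4 +
        C (t ^ 8 - 8 * t ^ 7 + 38 * t ^ 6 - 128 * t ^ 5 + 327 * t ^ 4 - 640 * t ^ 3 +
          910 * t ^ 2 - 784 * t - 343) * X ^ 2 - C (16 * t) : K[X]) (C (2 : K)) :=
      ⟨0, C ((2 : K)⁻¹), by rw [zero_mul, zero_add, ← C_mul, inv_mul_cancel₀ h2K, C_1]⟩
    have hd : derivative (C (16 * t ^ 7) * X ^ 6 +
        C (t ^ 8 + 16 * t ^ 7 - 130 * t ^ 6 + 640 * t ^ 5 - 2289 * t ^ 4 + 6272 * t ^ 3 -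
          13034 * t ^ 2 + 19208 * t - 16807) * X ^ 4 +
        C (t ^ 8 - 8 * t ^ 7 + 38 * t ^ 6 - 128 * t ^ 5 + 327 * t ^ 4 - 640 * t ^ 3 +
          910 * t ^ 2 - 784 * t - 343) * X ^ 2 - C (16 * t) : K[X]) = C (2 : K) * X * ((C (3 * (16 * t ^ 7)) * X ^ 2 +
        C (2 * (t ^ 8 + 16 * t ^ 7 - 130 * t ^ 6 + 640 * t ^ 5 - 2289 * t ^ 4 + 6272 * t ^ 3 -
          13034 * t ^ 2 + 19208 * t - 16807)) * X +
        C (t ^ 8 - 8 * t ^ 7 + 38 * t ^ 6 - 128 * t ^ 5 + 327 * t ^ 4 - 640 * t ^ 3 +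
          910 * t ^ 2 - 784 * t - 343) : K[X]).comp (X ^ 2)) := by
      simp only [derivative_sub, derivative_add, derivative_mul, derivative_C, derivative_X_pow,
        derivative_X, add_comp, mul_comp, pow_comp, C_comp, X_comp]
      simp only [C_add, C_sub, C_mul, C_pow, C_neg, map_ofNat]
      push_cast
      simp only [map_ofNat]
      ring
    rw [hd]
    refine IsCoprime.mul_right (IsCoprime.mul_right hcopF2 hcopFX) ?_
    rw [hFcomp]
    simpa only [coe_compRingHom_apply] using hcopG.map (compRingHom (X ^ 2))
  · compute_degree!
end

section
/- Let K be a field with char(K) ≠ 2 and let s ∈ K. Consider the Weierstrass curves E_s : y^2 = x^3 + (1/4)(s^2 + 18s − 27)x^2 − 36s·x − s^3 − 18s^2 + 27s and E'_s : y^2 = x^3 + (1/4)(s^2 + 18s − 27)x^2 − (5s^3 + 165s^2 + 891s + 1215)x − s^5 − 65s^4 − 1285s^3 − 7614s^2 − 17496s − 13851 over K. Then Δ(E_s) = s·(s + 3)^6·(s + 27)^2 and Δ(E'_s) = s^3·(s + 3)^6·(s + 27)^2; moreover, if s(s + 3)(s + 27) ≠ 0 then both discriminants are nonzero, j(E_s)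 = (s + 27)(s + 3)^3/s and j(E'_s) = (s + 27)(s + 243)^3/s^3. -/
/-- For the pair of 3-isogenous Weierstrass curves `E_s` and `E'_s` of Theorem 1
over a field `K` of characteristic different from `2`, their discriminants are
`s(s+3)⁶(s+27)²` and `s³(s+3)⁶(s+27)²`; if `s(s+3)(s+27) ≠ 0` then both are
nonzero and the j-invariants `c₄³/Δ` are `(s+27)(s+3)³/s` and `(s+27)(s+243)³/s³`. -/
theorem stmt_16 {K : Type*} [Field K] (hchar : ringChar K ≠ 2) (s : K) :
    let W : WeierstrassCurve K :=
      ⟨0, (1 / 4 : K) * (s ^ 2 + 18 * s - 27), 0, -(36 * s),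
        -s ^ 3 - 18 * s ^ 2 + 27 * s⟩
    let W' : WeierstrassCurve K :=
      ⟨0, (1 / 4 : K) * (s ^ 2 + 18 * s - 27), 0,
        -(5 * s ^ 3 + 165 * s ^ 2 + 891 * s + 1215),
        -s ^ 5 - 65 * s ^ 4 - 1285 * s ^ 3 - 7614 * s ^ 2 - 17496 * s - 13851⟩
    W.Δ = s * (s + 3) ^ 6 * (s + 27) ^ 2 ∧ W'.Δ = s ^ 3 * (s + 3) ^ 6 * (s + 27) ^ 2 ∧
      (s * (s + 3) * (s + 27) ≠ 0 → W.Δ ≠ 0 ∧ W'.Δ ≠ 0 ∧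
        W.c₄ ^ 3 / W.Δ = (s + 27) * (s + 3) ^ 3 / s ∧
        W'.c₄ ^ 3 / W'.Δ = (s + 27) * (s + 243) ^ 3 / s ^ 3) := by
  intro W W'
  have h2 : (2 : K) ≠ 0 := Ring.two_ne_zero hchar
  have h4 : (4 : K) ≠ 0 := by
    have : (4 : K) = 2 * 2 := by norm_num
    simpa [this] using mul_ne_zero h2 h2
  have hΔ : W.Δ = s * (s + 3) ^ 6 * (s + 27) ^ 2 := by
    simp only [W, WeierstrassCurve.Δ, WeierstrassCurve.b₂, WeierstrassCurve.b₄,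
      WeierstrassCurve.b₆, WeierstrassCurve.b₈]
    field_simp
    ring
  have hΔ' : W'.Δ = s ^ 3 * (s + 3) ^ 6 * (s + 27) ^ 2 := by
    simp only [W', WeierstrassCurve.Δ, WeierstrassCurve.b₂, WeierstrassCurve.b₄,
      WeierstrassCurve.b₆, WeierstrassCurve.b₈]
    field_simp
    ring
  have hc : W.c₄ = (s ^ 2 + 18 * s - 27) ^ 2 + 1728 * s := by
    simp only [W, WeierstrassCurve.c₄, WeierstrassCurve.b₂, WeierstrassCurve.b₄]
    field_simp
    ring
  have hc' : W'.c₄ = (s ^ 2 + 18 * s - 27) ^ 2 + 48 * (5 * s ^ 3 + 165 * s ^ 2 + 891 * s + 1215) := by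
    simp only [W', WeierstrassCurve.c₄, WeierstrassCurve.b₂, WeierstrassCurve.b₄]
    field_simp
    ring
  refine ⟨hΔ, hΔ', fun h => ?_⟩
  have hs : s ≠ 0 := fun hs => h (by simp [hs])
  have hs3 : s + 3 ≠ 0 := fun hs3 => h (by simp [hs3])
  have hs27 : s + 27 ≠ 0 := fun hs27 => h (by simp [hs27])
  have hΔne : W.Δ ≠ 0 := by
    rw [hΔ]; exact mul_ne_zero (mul_ne_zero hs (pow_ne_zero _ hs3)) (pow_ne_zero _ hs27)
  have hΔ'ne : W'.Δ ≠ 0 := by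
    rw [hΔ']; exact mul_ne_zero (mul_ne_zero (pow_ne_zero _ hs) (pow_ne_zero _ hs3))
      (pow_ne_zero _ hs27)
  refine ⟨hΔne, hΔ'ne, ?_, ?_⟩
  · rw [hc, hΔ, div_eq_div_iff (by rw [← hΔ]; exact hΔne) hs]
    ring
  · rw [hc', hΔ', div_eq_div_iff (by rw [← hΔ']; exact hΔ'ne) (pow_ne_zero _ hs)]
    ring
end

section
/- Let K be a field with char(K) ≠ 2 and let s ∈ K. Consider the Weierstrass curves E_s : y^2 = x^3 + (1/4)(s^4 + 14s^3 + 63s^2 + 70s − 7)x^2 − 36s·x − s(s^4 + 14s^3 + 63s^2 + 70s − 7) and E'_s : y^2 = x^3 + a·x^2 + b·x + c over K, where a = (1/4)(s^4 + 14s^3 + 63s^2 + 70s − 7), b = −(5s^7 + 165s^6 + 2180s^5 + 14555s^4 + 49820s^3 + 75215s^2 + 25431s + 2450), and c = −s^{11} − 61s^{10} − 1563s^9 − 22420s^8 − 199153s^7 − 1132425s^6 − 4079892s^5 − 8795374s^4 − 9879408s^3 − 4152015s^2 − 725788s − 45276. Then Δ(E_s) = s·(s^2 + 5s + 1)^6·(s^2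 + 13s + 49)^2 and Δ(E'_s) = s^7·(s^2 + 5s + 1)^6·(s^2 + 13s + 49)^2; moreover, if s(s^2 + 5s + 1)(s^2 + 13s + 49) ≠ 0 then both discriminants are nonzero, j(E_s) = (s^2 + 13s + 49)(s^2 + 5s + 1)^3/s and j(E'_s) = (s^2 + 13s + 49)(s^2 + 245s + 2401)^3/s^7. -/
/-- For the pair of 7-isogenous Weierstrass curves `E_s` and `E'_s` of Theorem 3
over a field `K` of characteristic different from `2`, their discriminants are
`s(s²+5s+1)⁶(s²+13s+49)²` and `s⁷(s²+5s+1)⁶(s²+13s+49)²`; if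
`s(s²+5s+1)(s²+13s+49) ≠ 0` then both are nonzero and the j-invariants `c₄³/Δ`
are `(s²+13s+49)(s²+5s+1)³/s` and `(s²+13s+49)(s²+245s+2401)³/s⁷`. -/
theorem stmt_18 {K : Type*} [Field K] (hchar : ringChar K ≠ 2) (s : K) :
    let W : WeierstrassCurve K :=
      ⟨0, (1 / 4 : K) * (s ^ 4 + 14 * s ^ 3 + 63 * s ^ 2 + 70 * s - 7), 0, -(36 * s),
        -(s * (s ^ 4 + 14 * s ^ 3 + 63 * s ^ 2 + 70 * s - 7))⟩
    let W' : WeierstrassCurve K :=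
      ⟨0, (1 / 4 : K) * (s ^ 4 + 14 * s ^ 3 + 63 * s ^ 2 + 70 * s - 7), 0,
        -(5 * s ^ 7 + 165 * s ^ 6 + 2180 * s ^ 5 + 14555 * s ^ 4 + 49820 * s ^ 3 +
          75215 * s ^ 2 + 25431 * s + 2450),
        -s ^ 11 - 61 * s ^ 10 - 1563 * s ^ 9 - 22420 * s ^ 8 - 199153 * s ^ 7 -
          1132425 * s ^ 6 - 4079892 * s ^ 5 - 8795374 * s ^ 4 - 9879408 * s ^ 3 -
          4152015 * s ^ 2 - 725788 * s - 45276⟩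
    W.Δ = s * (s ^ 2 + 5 * s + 1) ^ 6 * (s ^ 2 + 13 * s + 49) ^ 2 ∧
      W'.Δ = s ^ 7 * (s ^ 2 + 5 * s + 1) ^ 6 * (s ^ 2 + 13 * s + 49) ^ 2 ∧
      (s * (s ^ 2 + 5 * s + 1) * (s ^ 2 + 13 * s + 49) ≠ 0 → W.Δ ≠ 0 ∧ W'.Δ ≠ 0 ∧
        W.c₄ ^ 3 / W.Δ =
          (s ^ 2 + 13 * s + 49) * (s ^ 2 + 5 * s + 1) ^ 3 / s ∧
        W'.c₄ ^ 3 / W'.Δ =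
          (s ^ 2 + 13 * s + 49) * (s ^ 2 + 245 * s + 2401) ^ 3 / s ^ 7) := by
  intro W W'
  have h2 : (2 : K) ≠ 0 := Ring.two_ne_zero hchar
  have h4 : (4 : K) ≠ 0 := by
    have : (4 : K) = 2 * 2 := by norm_num
    rw [this]; exact mul_ne_zero h2 h2
  have hΔ : W.Δ = s * (s ^ 2 + 5 * s + 1) ^ 6 * (s ^ 2 + 13 * s + 49) ^ 2 := by
    simp only [WeierstrassCurve.Δ, WeierstrassCurve.b₂, WeierstrassCurve.b₄,
      WeierstrassCurve.b₆, WeierstrassCurve.b₈, W]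
    field_simp
    ring
  have hΔ' : W'.Δ = s ^ 7 * (s ^ 2 + 5 * s + 1) ^ 6 * (s ^ 2 + 13 * s + 49) ^ 2 := by
    simp only [WeierstrassCurve.Δ, WeierstrassCurve.b₂, WeierstrassCurve.b₄,
      WeierstrassCurve.b₆, WeierstrassCurve.b₈, W']
    field_simp
    ring
  refine ⟨hΔ, hΔ', fun h => ?_⟩
  have hs : s ≠ 0 := fun h0 => h (by rw [h0]; ring)
  have h1 : (s ^ 2 + 5 * s + 1) ≠ 0 := fun h0 => h (by rw [h0]; ring)
  have h13 : (s ^ 2 + 13 * s + 49) ≠ 0 := fun h0 => h (by rw [h0]; ring)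
  have hΔne : W.Δ ≠ 0 := by
    rw [hΔ]
    exact mul_ne_zero (mul_ne_zero hs (pow_ne_zero _ h1)) (pow_ne_zero _ h13)
  have hΔne' : W'.Δ ≠ 0 := by
    rw [hΔ']
    exact mul_ne_zero (mul_ne_zero (pow_ne_zero _ hs) (pow_ne_zero _ h1)) (pow_ne_zero _ h13)
  refine ⟨hΔne, hΔne', ?_, ?_⟩
  · rw [hΔ, div_eq_div_iff (by rwa [← hΔ]) hs]
    simp only [WeierstrassCurve.c₄, WeierstrassCurve.b₂, WeierstrassCurve.b₄, W]
    field_simp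
    ring
  · rw [hΔ', div_eq_div_iff (by rwa [← hΔ']) (pow_ne_zero _ hs)]
    simp only [WeierstrassCurve.c₄, WeierstrassCurve.b₂, WeierstrassCurve.b₄, W']
    field_simp
    ring
end
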